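/- arXiv:1612.09126 — 5 statements merged into one kernel-verified Lean document; each statement's English description precedes it below -/
import Mathlib

section
/- Let T > 0 and let Δ = {(t₁,t₂) ∈ ℝ² : 0 ≤ t₁ ≤ t₂ ≤ T}. Let m : Δ → [0,∞) be non-increasing in t₁, non-decreasing in t₂, with m(t,t) = 0 for all t ∈ [0,T], m(0,T) ≤ 1, and Hölder continuous: |m(t₁,t₂) − m(s₁,s₂)| ≤ C|t₁−s₁|^r + C|t₂−s₂|^r for some C, r > 0. Then for any positive integer n there exists a finite set Δ* ⊆ Δ of cardinality K ≤ (2n−1)·T·(Cn)^{1/r} + 1 such that for every (t₁,t₂) ∈ Δ there exists (s₁,s₂) ∈ Δ* with s₁ ≤ t₁, t₂ ≤ s₂, and m(s₁,s₂) − 2/n ≤ m(t₁,t₂); and moreover either m(t₁,t₂) ≤ 1/n or there exists (u₁,u₂) ∈ Δ* with t₁ ≤ u₁, u₂ ≤ t₂, and m(t₁,t₂) ≤ m(u₁,u₂) + 2/n. -/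
def Tri (T : ℝ) : Set (ℝ × ℝ) := {p | 0 ≤ p.1 ∧ p.1 ≤ p.2 ∧ p.2 ≤ T}

def MemD (T : ℝ) (z : ℝ → ℝ → ℝ) : Prop :=
  (∀ s₁ t₁ t₂, 0 ≤ s₁ → s₁ ≤ t₁ → t₁ ≤ t₂ → t₂ ≤ T → z t₁ t₂ ≤ z s₁ t₂) ∧
  (∀ t₁ s₂ t₂, 0 ≤ t₁ → t₁ ≤ s₂ → s₂ ≤ t₂ → t₂ ≤ T → z t₁ s₂ ≤ z t₁ t₂) ∧
  (∀ t, 0 ≤ t → t ≤ T → z t t = 0)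

/-!
Cut the triangle into columns `t₁ = j δ` of width `δ`, where `C δ ^ r = 1 / n`: moving `t₁` by
at most `δ` changes `m` by at most `1 / n`, and `m ≤ 1 / n` within `δ` of the diagonal. On a
column `c` and at a level `y = k / n`, the gate is `(c, τ)` with `τ` the last `t₂` such that
`m c t₂ ≤ y`; as `m c` is monotone and continuous, `m c τ = y` unless `τ = T`. A point
`(t₁, t₂)` lies below the gate of the column just left of `t₁` at the level just above
`m c t₂`, and, when `m t₁ t₂ > 1 / n` (so that `t₂ - t₁ > δ`), above the gate of the column just
right of `t₁` at the level just below. That makes `n` gates for each of the `⌊T / δ⌋ + 1`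
columns.
-/

open Set Filter Topology

lemma continuousOn_of_abs_sub_le_mul_rpow {f : ℝ → ℝ} {s : Set ℝ} {C r : ℝ} (hr : 0 < r)
    (hf : ∀ x ∈ s, ∀ y ∈ s, |f x - f y| ≤ C * |x - y| ^ r) : ContinuousOn f s := by
  intro x hx
  rw [ContinuousWithinAt, tendsto_iff_norm_sub_tendsto_zero]
  have hbound : Tendsto (fun y => C * |y - x| ^ r) (𝓝[s] x) (𝓝 0) := by
    have hcont : Continuous fun y : ℝ => C * |y - x| ^ r :=
      continuous_const.mul ((continuous_id.sub continuous_const).abs.rpow_const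
        fun _ => Or.inr hr.le)
    simpa [Real.zero_rpow hr.ne'] using (hcont.tendsto x).mono_left nhdsWithin_le_nhds
  exact squeeze_zero' (Eventually.of_forall fun _ => norm_nonneg _)
    (eventually_nhdsWithin_of_forall fun y hy => hf y hy x hx) hbound

noncomputable def lastSublevel (f : ℝ → ℝ) (a b y : ℝ) : ℝ :=
  sSup {t ∈ Icc a b | f t ≤ y}

section LastSublevel

variable {f : ℝ → ℝ} {a b y t : ℝ}

lemma le_lastSublevel (ht : t ∈ Icc a b) (hty : f t ≤ y) : t ≤ lastSublevel f a b y :=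
  le_csSup ⟨b, fun _ hs => hs.1.2⟩ ⟨ht, hty⟩

lemma lastSublevel_mem (hf : ContinuousOn f (Icc a b)) (hab : a ≤ b) (hay : f a ≤ y) :
    lastSublevel f a b y ∈ Icc a b ∧ f (lastSublevel f a b y) ≤ y :=
  IsClosed.csSup_mem (hf.preimage_isClosed_of_isClosed isClosed_Icc isClosed_Iic)
    ⟨a, left_mem_Icc.2 hab, hay⟩ ⟨b, fun _ hs => hs.1.2⟩

lemma lastSublevel_le (hf : MonotoneOn f (Icc a b)) (hay : f a ≤ y) (ht : t ∈ Icc a b)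
    (hyt : y < f t) : lastSublevel f a b y ≤ t := by
  refine csSup_le ⟨a, left_mem_Icc.2 (ht.1.trans ht.2), hay⟩ fun s ⟨hs, hsy⟩ => ?_
  by_contra! hts
  exact (hyt.trans_le (hf ht hs hts.le)).not_ge hsy

lemma apply_lastSublevel_eq (hcont : ContinuousOn f (Icc a b)) (hmono : MonotoneOn f (Icc a b))
    (hay : f a ≤ y) (ht : t ∈ Icc a b) (hyt : y < f t) : f (lastSublevel f a b y) = y := by
  set τ := lastSublevel f a b y
  obtain ⟨hτ, hτy⟩ := lastSublevel_mem hcont (ht.1.trans ht.2) hay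
  have hτt : τ ≤ t := lastSublevel_le hmono hay ht hyt
  obtain ⟨s, hs, hsy⟩ := intermediate_value_Icc hτt (hcont.mono (Icc_subset_Icc hτ.1 ht.2))
    ⟨hτy, hyt.le⟩
  have hsτ : s ≤ τ := le_lastSublevel ⟨hτ.1.trans hs.1, hs.2.trans ht.2⟩ hsy.le
  rwa [le_antisymm hsτ hs.1] at hsy

end LastSublevel

namespace MemD

variable {T : ℝ} {m : ℝ → ℝ → ℝ} (hm : MemD T m)
include hm

lemma nonneg {p : ℝ × ℝ} (hp : p ∈ Tri T) : 0 ≤ m p.1 p.2 := by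
  obtain ⟨h0, h12, h2T⟩ := hp
  simpa [hm.2.2 p.2 (h0.trans h12) h2T] using hm.1 p.1 p.2 p.2 h0 h12 le_rfl h2T

lemma le_apply_zero_T {p : ℝ × ℝ} (hp : p ∈ Tri T) : m p.1 p.2 ≤ m 0 T := by
  obtain ⟨h0, h12, h2T⟩ := hp
  exact (hm.1 0 p.1 p.2 le_rfl h0 h12 h2T).trans (hm.2.1 0 p.2 T le_rfl (h0.trans h12) h2T le_rfl)

lemma monotoneOn_snd {c : ℝ} (hc : 0 ≤ c) : MonotoneOn (m c) (Icc c T) :=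
  fun _ hs _ ht hst => hm.2.1 c _ _ hc hs.1 hst ht.2

end MemD

section Holder

variable {T C r : ℝ} {m : ℝ → ℝ → ℝ}
  (hH : ∀ p q : ℝ × ℝ, p ∈ Tri T → q ∈ Tri T →
    |m p.1 p.2 - m q.1 q.2| ≤ C * |p.1 - q.1| ^ r + C * |p.2 - q.2| ^ r)
include hH

lemma abs_sub_le_of_holder_fst (hr : 0 < r) {p q : ℝ × ℝ} (hp : p ∈ Tri T) (hq : q ∈ Tri T)
    (h : p.2 = q.2) : |m p.1 p.2 - m q.1 q.2| ≤ C * |p.1 - q.1| ^ r := by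
  simpa [h, Real.zero_rpow hr.ne'] using hH p q hp hq

lemma continuousOn_snd_of_holder (hr : 0 < r) {c : ℝ} (hc : 0 ≤ c) :
    ContinuousOn (m c) (Icc c T) :=
  continuousOn_of_abs_sub_le_mul_rpow hr fun x hx y hy => by
    simpa [Real.zero_rpow hr.ne'] using hH (c, x) (c, y) ⟨hc, hx.1, hx.2⟩ ⟨hc, hy.1, hy.2⟩

lemma le_mul_sub_rpow_of_holder (hr : 0 < r) (hm : MemD T m) {p : ℝ × ℝ} (hp : p ∈ Tri T) :
    m p.1 p.2 ≤ C * (p.2 - p.1) ^ r := by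
  obtain ⟨h0, h12, h2T⟩ := hp
  have hdiag : (p.2, p.2) ∈ Tri T := ⟨h0.trans h12, le_rfl, h2T⟩
  have := abs_sub_le_of_holder_fst hH hr ⟨h0, h12, h2T⟩ hdiag rfl
  rw [hm.2.2 p.2 (h0.trans h12) h2T, sub_zero, abs_sub_comm, abs_of_nonneg (sub_nonneg.2 h12)]
    at this
  exact (le_abs_self _).trans this

end Holder

noncomputable def gatePoint (T : ℝ) (m : ℝ → ℝ → ℝ) (c y : ℝ) : ℝ × ℝ :=
  (c, lastSublevel (m c) c T y)

section GatePoint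

variable {T : ℝ} {m : ℝ → ℝ → ℝ} {c y ε : ℝ} {p : ℝ × ℝ}
  (hm : MemD T m) (hcont : ContinuousOn (m c) (Icc c T))
include hm hcont

lemma gatePoint_mem_tri (hc0 : 0 ≤ c) (hcT : c ≤ T) (hy : 0 ≤ y) :
    gatePoint T m c y ∈ Tri T :=
  ⟨hc0, (lastSublevel_mem hcont hcT (by rwa [hm.2.2 c hc0 hcT])).1⟩

lemma gatePoint_above (hp : p ∈ Tri T) (hc0 : 0 ≤ c) (hc : c ≤ p.1) (hy : m c p.2 ≤ y)
    (hε : y ≤ m p.1 p.2 + ε) :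
    (gatePoint T m c y).1 ≤ p.1 ∧ p.2 ≤ (gatePoint T m c y).2 ∧
      m (gatePoint T m c y).1 (gatePoint T m c y).2 - ε ≤ m p.1 p.2 := by
  have hcp : (c, p.2) ∈ Tri T := ⟨hc0, hc.trans hp.2.1, hp.2.2⟩
  have hcT : c ≤ T := hcp.2.1.trans hp.2.2
  have hcy : m c c ≤ y := by rw [hm.2.2 c hc0 hcT]; exact (hm.nonneg hcp).trans hy
  have hτ := (lastSublevel_mem hcont hcT hcy).2
  refine ⟨hc, le_lastSublevel ⟨hcp.2.1, hp.2.2⟩ hy, ?_⟩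
  simp only [gatePoint]
  linarith

lemma gatePoint_below (hp : p ∈ Tri T) (hc : p.1 ≤ c) (hcp : c ≤ p.2) (hy0 : 0 ≤ y)
    (hy : y < m c p.2) (hε : m p.1 p.2 ≤ y + ε) :
    p.1 ≤ (gatePoint T m c y).1 ∧ (gatePoint T m c y).2 ≤ p.2 ∧
      m p.1 p.2 ≤ m (gatePoint T m c y).1 (gatePoint T m c y).2 + ε := by
  have hc0 : 0 ≤ c := hp.1.trans hc
  have hcy : m c c ≤ y := by rwa [hm.2.2 c hc0 (hcp.trans hp.2.2)]
  have hmono := hm.monotoneOn_snd hc0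
  refine ⟨hc, lastSublevel_le hmono hcy ⟨hcp, hp.2.2⟩ hy, ?_⟩
  simp only [gatePoint]
  rwa [apply_lastSublevel_eq hcont hmono hcy ⟨hcp, hp.2.2⟩ hy]

end GatePoint

def IsGateSet (T : ℝ) (m : ℝ → ℝ → ℝ) (ε η : ℝ) (Δ : Finset (ℝ × ℝ)) : Prop :=
  ↑Δ ⊆ Tri T ∧ ∀ p ∈ Tri T,
    (∃ s ∈ Δ, s.1 ≤ p.1 ∧ p.2 ≤ s.2 ∧ m s.1 s.2 - ε ≤ m p.1 p.2) ∧
    (m p.1 p.2 ≤ η ∨ ∃ u ∈ Δ, p.1 ≤ u.1 ∧ u.2 ≤ p.2 ∧ m p.1 p.2 ≤ m u.1 u.2 + ε)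

lemma isGateSet_singleton {T ε η : ℝ} {m : ℝ → ℝ → ℝ} (hT : 0 ≤ T) (hm : MemD T m)
    (hηε : η ≤ ε) (hsmall : ∀ p ∈ Tri T, m p.1 p.2 ≤ η) : IsGateSet T m ε η {(0, T)} := by
  have hT0 : ((0 : ℝ), T) ∈ Tri T := ⟨le_rfl, hT, le_rfl⟩
  refine ⟨by simpa using hT0, fun p hp =>
    ⟨⟨(0, T), Finset.mem_singleton_self _, hp.1, hp.2.2, ?_⟩, Or.inl (hsmall p hp)⟩⟩
  linarith [hsmall _ hT0, hm.nonneg hp]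

section Grid

variable {t δ : ℝ}

lemma natFloor_div_mul_le (hδ : 0 < δ) (ht : 0 ≤ t) : ⌊t / δ⌋₊ * δ ≤ t :=
  (le_div_iff₀ hδ).1 (Nat.floor_le (div_nonneg ht hδ.le))

lemma lt_natFloor_div_mul_add (hδ : 0 < δ) : t < ⌊t / δ⌋₊ * δ + δ := by
  have := Nat.lt_floor_add_one (t / δ)
  rw [div_lt_iff₀ hδ] at this
  linarith

lemma le_natFloor_div_iff (hδ : 0 < δ) (ht : 0 ≤ t) {j : ℕ} : j ≤ ⌊t / δ⌋₊ ↔ j * δ ≤ t := by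
  rw [Nat.le_floor_iff (div_nonneg ht hδ.le), le_div_iff₀ hδ]

variable {n : ℕ} {v : ℝ}

lemma exists_le_nat_div_le_add (hn : 0 < n) (hv0 : 0 ≤ v) (hv1 : v ≤ 1) :
    ∃ k ≤ n, v ≤ k / n ∧ (k : ℝ) / n ≤ v + 1 / n := by
  have hn' : (0 : ℝ) < n := Nat.cast_pos.2 hn
  refine ⟨⌈n * v⌉₊, Nat.ceil_le.2 (by nlinarith), ?_, ?_⟩
  · rw [le_div_iff₀ hn', mul_comm]
    exact Nat.le_ceil _
  · rw [div_le_iff₀ hn', add_mul, one_div_mul_cancel hn'.ne', mul_comm]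
    exact (Nat.ceil_lt_add_one (by positivity)).le

lemma exists_nat_div_lt_le_add (hn : 0 < n) (hv0 : 0 < v) (hv1 : v ≤ 1) :
    ∃ k < n, (k : ℝ) / n < v ∧ v ≤ k / n + 1 / n := by
  have hn' : (0 : ℝ) < n := Nat.cast_pos.2 hn
  have hceil : 1 ≤ ⌈n * v⌉₊ := Nat.one_le_iff_ne_zero.2 (Nat.ceil_pos.2 (by positivity)).ne'
  have hcast : ((⌈n * v⌉₊ - 1 : ℕ) : ℝ) = ⌈n * v⌉₊ - 1 := by push_cast [hceil]; ring
  refine ⟨⌈n * v⌉₊ - 1, by have := Nat.ceil_le.2 (by nlinarith : n * v ≤ n); omega, ?_, ?_⟩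
  · rw [div_lt_iff₀ hn', hcast]
    linarith [Nat.ceil_lt_add_one (by positivity : 0 ≤ n * v), mul_comm v n]
  · rw [← add_div, le_div_iff₀ hn', hcast]
    linarith [Nat.le_ceil (n * v), mul_comm v n]

end Grid

/-- Column `0` carries the level `1` instead of the level `0`: its gate `(0, T)` serves every
column whose value is within `1 / n` of `1`, and the count stays at `n` gates per column. -/
noncomputable def gateSet (T : ℝ) (m : ℝ → ℝ → ℝ) (δ : ℝ) (n : ℕ) : Finset (ℝ × ℝ) :=
  (Finset.Icc 1 n).image (fun k : ℕ => gatePoint T m 0 (k / n)) ∪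
    (Finset.Icc 1 ⌊T / δ⌋₊ ×ˢ Finset.range n).image fun jk => gatePoint T m (jk.1 * δ) (jk.2 / n)

section GateSet

variable {T δ : ℝ} {m : ℝ → ℝ → ℝ} {n : ℕ}

lemma gatePoint_zero_mem_gateSet {k : ℕ} (hk : k ∈ Finset.Icc 1 n) :
    gatePoint T m 0 (k / n) ∈ gateSet T m δ n :=
  Finset.mem_union_left _ (Finset.mem_image_of_mem _ hk)

lemma gatePoint_mem_gateSet {j k : ℕ} (hj : j ∈ Finset.Icc 1 ⌊T / δ⌋₊) (hk : k < n) :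
    gatePoint T m (j * δ) (k / n) ∈ gateSet T m δ n :=
  Finset.mem_union_right _
    (Finset.mem_image.2 ⟨(j, k), Finset.mem_product.2 ⟨hj, Finset.mem_range.2 hk⟩, rfl⟩)

lemma card_gateSet_le (hn : 0 < n) (hδ : 0 < δ) (hδT : δ ≤ T) :
    ((gateSet T m δ n).card : ℝ) ≤ (2 * n - 1) * (T / δ) + 1 := by
  have hcard : (gateSet T m δ n).card ≤ n + ⌊T / δ⌋₊ * n :=
    (Finset.card_union_le _ _).trans
      (add_le_add (Finset.card_image_le.trans (by simp)) (Finset.card_image_le.trans (by simp)))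
  have hX : 1 ≤ T / δ := (one_le_div hδ).2 hδT
  have hJ : (⌊T / δ⌋₊ : ℝ) ≤ T / δ := Nat.floor_le (by positivity)
  have hn1 : (1 : ℝ) ≤ n := Nat.one_le_cast.2 hn
  calc ((gateSet T m δ n).card : ℝ) ≤ n + ⌊T / δ⌋₊ * n := by exact_mod_cast hcard
    _ ≤ (2 * n - 1) * (T / δ) + 1 := by nlinarith

variable (hm : MemD T m) (hcont : ∀ c, 0 ≤ c → ContinuousOn (m c) (Icc c T)) (hδ : 0 < δ)
include hm hcont hδ

lemma gateSet_subset_tri (hT : 0 ≤ T) : ↑(gateSet T m δ n) ⊆ Tri T := by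
  intro s hs
  simp only [gateSet, Finset.coe_union, Finset.coe_image, Set.mem_union, Set.mem_image,
    Finset.mem_coe, Finset.mem_Icc, Finset.mem_product, Finset.mem_range] at hs
  rcases hs with ⟨k, -, rfl⟩ | ⟨⟨j, k⟩, ⟨⟨-, hj⟩, -⟩, rfl⟩
  · exact gatePoint_mem_tri hm (hcont 0 le_rfl) le_rfl hT (by positivity)
  · exact gatePoint_mem_tri hm (hcont _ (by positivity)) (by positivity)
      ((le_natFloor_div_iff hδ hT).1 hj) (by positivity)

variable (hm1 : m 0 T ≤ 1) (hn : 0 < n)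
  (hfst : ∀ p ∈ Tri T, ∀ q ∈ Tri T, p.2 = q.2 → |p.1 - q.1| ≤ δ →
    |m p.1 p.2 - m q.1 q.2| ≤ 1 / n)
include hm1 hn hfst

lemma exists_gate_above {p : ℝ × ℝ} (hp : p ∈ Tri T) :
    ∃ s ∈ gateSet T m δ n, s.1 ≤ p.1 ∧ p.2 ≤ s.2 ∧ m s.1 s.2 - 2 / n ≤ m p.1 p.2 := by
  obtain ⟨h0, h12, h2T⟩ := hp
  set j := ⌊p.1 / δ⌋₊
  have hc : j * δ ≤ p.1 := natFloor_div_mul_le hδ h0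
  have hcp : (j * δ, p.2) ∈ Tri T := ⟨by positivity, hc.trans h12, h2T⟩
  have hclose := hfst _ hcp p ⟨h0, h12, h2T⟩ rfl (by
    rw [abs_of_nonpos (by linarith)]; linarith [lt_natFloor_div_mul_add (t := p.1) hδ])
  obtain ⟨k, hkn, hvk, hkv⟩ := exists_le_nat_div_le_add hn (hm.nonneg hcp)
    ((hm.le_apply_zero_T hcp).trans hm1)
  have hkp : (k : ℝ) / n ≤ m p.1 p.2 + 2 / n := by
    linarith [(abs_le.1 hclose).2, add_div (1 : ℝ) 1 n]
  by_cases hcol : j = 0 ∨ k = n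
  · refine ⟨_, gatePoint_zero_mem_gateSet (k := max k 1)
      (Finset.mem_Icc.2 ⟨le_max_right _ _, max_le hkn hn⟩),
      gatePoint_above hm (hcont 0 le_rfl) ⟨h0, h12, h2T⟩ le_rfl h0 ?_ ?_⟩
    · have hk : m 0 p.2 ≤ k / n := by
        rcases hcol with hj | rfl
        · simpa [hj] using hvk
        · rw [div_self (by positivity)]
          exact (hm.le_apply_zero_T (p := (0, p.2)) ⟨le_rfl, h0.trans h12, h2T⟩).trans hm1
      exact hk.trans (by gcongr; exact_mod_cast le_max_left k 1)
    · rw [Nat.cast_max, Nat.cast_one, ← max_div_div_right (by positivity)]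
      refine max_le hkp ?_
      have := hm.nonneg ⟨h0, h12, h2T⟩
      have : (1 : ℝ) / n ≤ 2 / n := by gcongr; norm_num
      linarith
  · obtain ⟨hj, hk⟩ := not_or.1 hcol
    exact ⟨_, gatePoint_mem_gateSet (Finset.mem_Icc.2 ⟨Nat.one_le_iff_ne_zero.2 hj,
        (le_natFloor_div_iff hδ (h0.trans (h12.trans h2T))).2 (hc.trans (h12.trans h2T))⟩)
        (lt_of_le_of_ne hkn hk),
      gatePoint_above hm (hcont _ hcp.1) ⟨h0, h12, h2T⟩ hcp.1 hc hvk hkp⟩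

lemma exists_gate_below (hdiag : ∀ p ∈ Tri T, p.2 - p.1 ≤ δ → m p.1 p.2 ≤ 1 / n)
    {p : ℝ × ℝ} (hp : p ∈ Tri T) (hbig : 1 / n < m p.1 p.2) :
    ∃ u ∈ gateSet T m δ n, p.1 ≤ u.1 ∧ u.2 ≤ p.2 ∧ m p.1 p.2 ≤ m u.1 u.2 + 2 / n := by
  obtain ⟨h0, h12, h2T⟩ := hp
  have hwide : p.1 + δ < p.2 := by
    by_contra! h
    exact (hdiag p ⟨h0, h12, h2T⟩ (by linarith)).not_gt hbig
  set j := ⌊p.1 / δ⌋₊ + 1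
  have hc : p.1 ≤ j * δ := by
    push_cast [j]
    linarith [lt_natFloor_div_mul_add (t := p.1) hδ]
  have hcδ : j * δ ≤ p.1 + δ := by
    push_cast [j]
    linarith [natFloor_div_mul_le hδ h0]
  have hcp : (j * δ, p.2) ∈ Tri T := ⟨h0.trans hc, by linarith, h2T⟩
  have hclose := hfst _ hcp p ⟨h0, h12, h2T⟩ rfl (by rw [abs_of_nonneg (by linarith)]; linarith)
  obtain ⟨k, hkn, hkv, hvk⟩ := exists_nat_div_lt_le_add hn
    (by linarith [(abs_le.1 hclose).1]) ((hm.le_apply_zero_T hcp).trans hm1)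
  refine ⟨_, gatePoint_mem_gateSet (Finset.mem_Icc.2 ⟨Nat.le_add_left 1 _,
      (le_natFloor_div_iff hδ (h0.trans (h12.trans h2T))).2 (by linarith)⟩) hkn,
    gatePoint_below hm (hcont _ hcp.1) ⟨h0, h12, h2T⟩ hc hcp.2.1 (by positivity) hkv ?_⟩
  linarith [(abs_le.1 hclose).1, add_div (1 : ℝ) 1 n]

lemma isGateSet_gateSet (hT : 0 ≤ T) (hdiag : ∀ p ∈ Tri T, p.2 - p.1 ≤ δ → m p.1 p.2 ≤ 1 / n) :
    IsGateSet T m (2 / n) (1 / n) (gateSet T m δ n) :=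
  ⟨gateSet_subset_tri hm hcont hδ hT, fun _ hp =>
    ⟨exists_gate_above hm hcont hδ hm1 hn hfst hp,
      (le_or_gt _ _).imp_right (exists_gate_below hm hcont hδ hm1 hn hfst hdiag hp)⟩⟩

end GateSet

theorem finite_gate_set
    (T : ℝ) (hT : 0 < T) (m : ℝ → ℝ → ℝ) (C r : ℝ) (hC : 0 < C) (hr : 0 < r)
    (hm : MemD T m) (hm1 : m 0 T ≤ 1)
    (hHolder : ∀ p q : ℝ × ℝ, p ∈ Tri T → q ∈ Tri T →
      |m p.1 p.2 - m q.1 q.2| ≤ C * |p.1 - q.1| ^ r + C * |p.2 - q.2| ^ r)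
    (n : ℕ) (hn : 0 < n) :
    ∃ Δstar : Finset (ℝ × ℝ), ↑Δstar ⊆ Tri T ∧
      (Δstar.card : ℝ) ≤ (2 * n - 1) * T * (C * n) ^ (1 / r) + 1 ∧
      ∀ p ∈ Tri T,
        (∃ s ∈ Δstar, s.1 ≤ p.1 ∧ p.2 ≤ s.2 ∧ m s.1 s.2 - 2 / n ≤ m p.1 p.2) ∧
        (m p.1 p.2 ≤ 1 / n ∨
          ∃ u ∈ Δstar, p.1 ≤ u.1 ∧ u.2 ≤ p.2 ∧ m p.1 p.2 ≤ m u.1 u.2 + 2 / n) := by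
  have hn' : (0 : ℝ) < n := Nat.cast_pos.2 hn
  set δ := ((C * n) ^ (1 / r))⁻¹
  have hδ : 0 < δ := by positivity
  have hCδ : C * δ ^ r = 1 / n := by
    rw [Real.inv_rpow (by positivity), ← Real.rpow_mul (by positivity), one_div_mul_cancel hr.ne',
      Real.rpow_one]
    field_simp
  have hfst : ∀ p ∈ Tri T, ∀ q ∈ Tri T, p.2 = q.2 → |p.1 - q.1| ≤ δ →
      |m p.1 p.2 - m q.1 q.2| ≤ 1 / n := fun p hp q hq h hpq =>
    hCδ ▸ (abs_sub_le_of_holder_fst hHolder hr hp hq h).trans (by gcongr)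
  have hdiag : ∀ p ∈ Tri T, p.2 - p.1 ≤ δ → m p.1 p.2 ≤ 1 / n := fun p hp hpδ =>
    hCδ ▸ (le_mul_sub_rpow_of_holder hHolder hr hm hp).trans (by gcongr; linarith [hp.2.1])
  obtain ⟨Δ, hΔ, hcard⟩ : ∃ Δ, IsGateSet T m (2 / n) (1 / n) Δ ∧
      (Δ.card : ℝ) ≤ (2 * n - 1) * (T / δ) + 1 := by
    rcases lt_or_ge T δ with hTδ | hδT
    · refine ⟨{(0, T)}, isGateSet_singleton hT.le hm (by gcongr; norm_num)
        fun p hp => hdiag p hp (by linarith [hp.1, hp.2.2]), ?_⟩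
      have : (1 : ℝ) ≤ 2 * n - 1 := by linarith [(Nat.one_le_cast (α := ℝ)).2 hn]
      simp only [Finset.card_singleton, Nat.cast_one, le_add_iff_nonneg_left]
      positivity
    · exact ⟨_, isGateSet_gateSet hm (fun c hc => continuousOn_snd_of_holder hHolder hr hc) hδ
        hm1 hn hfst hT.le hdiag, card_gateSet_le hn hδ hδT⟩
  refine ⟨Δ, hΔ.1, ?_, hΔ.2⟩
  rwa [div_inv_eq_mul, ← mul_assoc] at hcard
end

section
/- Let T > 0, Δ = {(t₁,t₂) : 0 ≤ t₁ ≤ t₂ ≤ T}, and let m ∈ 𝒟 satisfy m(0,T) ≤ 1 and the Hölder condition |m(t₁,t₂) − m(s₁,s₂)| ≤ C|t₁−s₁|^r + C|t₂−s₂|^r with C, r > 0. Then for every positive integer n there exists a finite set Δ* = {(t_{k,1}, t_{k,2}) : k = 1,…,K} ⊆ Δ with K ≤ (2n−1)·T·(Cn)^{1/r} + 1 such that for EVERY function y ∈ 𝒟 (not necessarily continuous), sup over (t₁,t₂) ∈ Δ of |y(t₁,t₂) − m(t₁,t₂)| is at most (max over k = 1,…,K of |y(t_{k,1},t_{k,2})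 − m(t_{k,1},t_{k,2})|) + 2/n. -/
set_option maxHeartbeats 2000000 in
theorem finite_gate_uniform_approximation
    (T : ℝ) (hT : 0 < T) (m : ℝ → ℝ → ℝ) (C r : ℝ) (hC : 0 < C) (hr : 0 < r)
    (hm : MemD T m) (hm1 : m 0 T ≤ 1)
    (hHolder : ∀ p q : ℝ × ℝ, p ∈ Tri T → q ∈ Tri T →
      |m p.1 p.2 - m q.1 q.2| ≤ C * |p.1 - q.1| ^ r + C * |p.2 - q.2| ^ r)
    (n : ℕ) (hn : 0 < n) :
    ∃ Δstar : Finset (ℝ × ℝ), ∃ hne : Δstar.Nonempty, ↑Δstar ⊆ Tri T ∧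
      (Δstar.card : ℝ) ≤ (2 * n - 1) * T * (C * n) ^ (1 / r) + 1 ∧
      ∀ y : ℝ → ℝ → ℝ, MemD T y →
        ∀ p ∈ Tri T, |y p.1 p.2 - m p.1 p.2| ≤
          (Δstar.sup' hne fun k => |y k.1 k.2 - m k.1 k.2|) + 2 / n := by
  classical
  obtain ⟨hm_dec, hm_inc, hm_diag⟩ := hm
  have hn' : (0:ℝ) < n := by exact_mod_cast hn
  have hn1 : (1:ℝ) ≤ n := by exact_mod_cast hn
  have hCn : (0:ℝ) < C * n := by positivity
  set E : ℝ := (C * n) ^ (1/r : ℝ) with hE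
  have hEpos : 0 < E := Real.rpow_pos_of_pos hCn _
  set d : ℝ := E⁻¹ with hd
  have hdpos : 0 < d := inv_pos.mpr hEpos
  have hpow : ∀ x : ℝ, 0 ≤ x → (x ^ (1/r : ℝ)) ^ r = x := by
    intro x hx
    rw [← Real.rpow_mul hx, one_div_mul_cancel hr.ne', Real.rpow_one]
  have hdr : C * d ^ r = 1/n := by
    rw [hd, hE, Real.inv_rpow (Real.rpow_pos_of_pos hCn _).le, hpow _ hCn.le]
    field_simp
  have hkey : ∀ x : ℝ, 0 ≤ x → x ≤ d → C * x ^ r ≤ 1 / n := by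
    intro x hx hxd
    have h1 : x ^ r ≤ d ^ r := Real.rpow_le_rpow hx hxd hr.le
    nlinarith [hdr]
  -- horizontal Hölder step
  have hmH : ∀ a a' b : ℝ, 0 ≤ a → a ≤ a' → a' ≤ b → b ≤ T →
      m a b - m a' b ≤ C * (a' - a) ^ r := by
    intro a a' b h0 h1 h2 h3
    have h := hHolder (a, b) (a', b) ⟨h0, h1.trans h2, h3⟩ ⟨h0.trans h1, h2, h3⟩
    simp only at h
    rw [sub_self, abs_zero, Real.zero_rpow hr.ne', mul_zero, add_zero,
        abs_of_nonpos (by linarith : a - a' ≤ 0), neg_sub] at h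
    linarith [le_abs_self (m a b - m a' b)]
  -- nonnegativity and boundedness of m
  have hm0 : ∀ a b : ℝ, 0 ≤ a → a ≤ b → b ≤ T → 0 ≤ m a b := by
    intro a b h1 h2 h3
    have h4 := hm_dec a b b h1 h2 le_rfl h3
    rw [hm_diag b (h1.trans h2) h3] at h4
    exact h4
  have hmle1 : ∀ a b : ℝ, 0 ≤ a → a ≤ b → b ≤ T → m a b ≤ 1 := by
    intro a b h1 h2 h3
    have h4 := hm_dec 0 a b le_rfl h1 h2 h3
    have h5 := hm_inc 0 b T le_rfl (h1.trans h2) h3 le_rfl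
    linarith
  -- continuity in the second variable
  have hcont : ∀ a : ℝ, 0 ≤ a → a ≤ T → ContinuousOn (fun s => m a s) (Set.Icc a T) := by
    intro a ha haT
    rw [Metric.continuousOn_iff]
    intro x hx ε hε
    refine ⟨(ε/(2*C)) ^ (1/r : ℝ), Real.rpow_pos_of_pos (by positivity) _, ?_⟩
    intro s hs hdist
    rw [Real.dist_eq] at hdist ⊢
    have h := hHolder (a, s) (a, x) ⟨ha, hs.1, hs.2⟩ ⟨ha, hx.1, hx.2⟩
    simp only at h
    rw [sub_self, abs_zero, Real.zero_rpow hr.ne', mul_zero, zero_add] at h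
    have h2 : |s - x| ^ r ≤ ((ε/(2*C)) ^ (1/r:ℝ)) ^ r :=
      Real.rpow_le_rpow (abs_nonneg _) hdist.le hr.le
    rw [hpow _ (by positivity)] at h2
    have hC2 : C * (ε/(2*C)) = ε/2 := by field_simp
    calc |m a s - m a x| ≤ C * |s - x| ^ r := h
      _ ≤ C * (ε/(2*C)) := by nlinarith
      _ < ε := by rw [hC2]; linarith
  have h2n : (1:ℝ)/n + 1/n = 2/n := by ring
  by_cases hTE : T * E ≤ 1
  · -- small case: a single gate (0, T)
    have hne : ({((0:ℝ), T)} : Finset (ℝ × ℝ)).Nonempty := Finset.singleton_nonempty _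
    refine ⟨{((0:ℝ), T)}, hne, ?_, ?_, ?_⟩
    · intro q hq
      simp only [Finset.coe_singleton, Set.mem_singleton_iff] at hq
      subst hq
      exact ⟨le_rfl, hT.le, le_rfl⟩
    · rw [Finset.card_singleton]
      have : (0:ℝ) ≤ (2*n - 1) * T * E := by
        apply mul_nonneg (mul_nonneg (by linarith) hT.le) hEpos.le
      push_cast
      linarith
    · intro y hy p hp
      obtain ⟨hy_dec, hy_inc, hy_diag⟩ := hy
      obtain ⟨p1, p2⟩ := p
      obtain ⟨hp1, hp12, hp2T⟩ := hp
      rw [Finset.sup'_singleton]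
      have hTd : T ≤ d := by
        have h := mul_le_mul_of_nonneg_right hTE hdpos.le
        rwa [mul_assoc, hd, mul_inv_cancel₀ hEpos.ne', mul_one, one_mul] at h
      have hm0T : m 0 T ≤ 1/n := by
        have h := hmH 0 T T le_rfl hT.le le_rfl le_rfl
        rw [hm_diag T hT.le le_rfl, sub_zero, sub_zero] at h
        exact h.trans (hkey T hT.le hTd)
      have hyp_le : y p1 p2 ≤ y 0 T :=
        le_trans (hy_dec 0 p1 p2 le_rfl hp1 hp12 hp2T)
          (hy_inc 0 p2 T le_rfl (hp1.trans hp12) hp2T le_rfl)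
      have hmp0 : 0 ≤ m p1 p2 := hm0 _ _ hp1 hp12 hp2T
      have hmpT : m p1 p2 ≤ m 0 T :=
        le_trans (hm_dec 0 p1 p2 le_rfl hp1 hp12 hp2T)
          (hm_inc 0 p2 T le_rfl (hp1.trans hp12) hp2T le_rfl)
      have hy0 : 0 ≤ y p1 p2 := by
        have h := hy_dec p1 p2 p2 hp1 hp12 le_rfl hp2T
        rw [hy_diag p2 (hp1.trans hp12) hp2T] at h
        exact h
      have hgate : y 0 T - m 0 T ≤ |y 0 T - m 0 T| := le_abs_self _
      have habs0 : (0:ℝ) ≤ |y 0 T - m 0 T| := abs_nonneg _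
      rw [abs_sub_le_iff]
      constructor <;> [skip; skip] <;> simp only <;> linarith
  · push_neg at hTE
    have hTE0 : (0:ℝ) < T * E := by positivity
    set N : ℕ := ⌈T * E⌉₊ with hN
    have hNx : (N:ℝ) < T*E + 1 := Nat.ceil_lt_add_one hTE0.le
    have hNpos : 0 < N := Nat.ceil_pos.mpr hTE0
    have htj : ∀ j : ℕ, j < N → (j:ℝ) * d < T := by
      intro j hj
      have h1 : (j:ℝ) < T * E := Nat.lt_ceil.mp hj
      have h2 := mul_lt_mul_of_pos_right h1 hdpos
      rwa [mul_assoc, hd, mul_inv_cancel₀ hEpos.ne', mul_one] at h2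
    have hjN_of : ∀ j : ℕ, (j:ℝ) * d < T → j < N := by
      intro j hj
      apply Nat.lt_ceil.mpr
      have h2 := mul_lt_mul_of_pos_right hj hEpos
      rwa [mul_assoc, hd, inv_mul_cancel₀ hEpos.ne', mul_one] at h2
    set lev : ℕ → ℝ := fun ℓ => (ℓ:ℝ) / n with hlev
    set cr : ℕ → ℕ → ℝ := fun j ℓ =>
      sInf (Set.Icc ((j:ℝ)*d) T ∩ (fun s => m ((j:ℝ)*d) s) ⁻¹' {lev ℓ}) with hcr
    have hcross : ∀ j ℓ : ℕ, j < N → 1 ≤ ℓ → lev ℓ ≤ m ((j:ℝ)*d) T →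
        (cr j ℓ ∈ Set.Icc ((j:ℝ)*d) T ∧ m ((j:ℝ)*d) (cr j ℓ) = lev ℓ ∧
         ∀ s ∈ Set.Icc ((j:ℝ)*d) T, m ((j:ℝ)*d) s = lev ℓ → cr j ℓ ≤ s) := by
      intro j ℓ hj hℓ hlevle
      have h0 : (0:ℝ) ≤ (j:ℝ)*d := by positivity
      have hjT : (j:ℝ)*d ≤ T := (htj j hj).le
      have hlev0 : (0:ℝ) ≤ lev ℓ := by simp only [hlev]; positivity
      have hmemS : ∀ s, s ∈ (Set.Icc ((j:ℝ)*d) T ∩ (fun s => m ((j:ℝ)*d) s) ⁻¹' {lev ℓ}) ↔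
          s ∈ Set.Icc ((j:ℝ)*d) T ∧ m ((j:ℝ)*d) s = lev ℓ := by
        intro s
        simp [Set.mem_inter_iff, Set.mem_preimage, Set.mem_singleton_iff]
      have hSne : (Set.Icc ((j:ℝ)*d) T ∩ (fun s => m ((j:ℝ)*d) s) ⁻¹' {lev ℓ}).Nonempty := by
        have hiv := intermediate_value_Icc hjT (hcont _ h0 hjT)
        have hmm : lev ℓ ∈ Set.Icc (m ((j:ℝ)*d) ((j:ℝ)*d)) (m ((j:ℝ)*d) T) := by
          rw [hm_diag _ h0 hjT]
          exact ⟨hlev0, hlevle⟩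
        obtain ⟨s, hs1, hs2⟩ := hiv hmm
        exact ⟨s, (hmemS s).mpr ⟨hs1, hs2⟩⟩
      have hSbdd : BddBelow (Set.Icc ((j:ℝ)*d) T ∩ (fun s => m ((j:ℝ)*d) s) ⁻¹' {lev ℓ}) :=
        ⟨(j:ℝ)*d, fun s hs => ((hmemS s).mp hs).1.1⟩
      have hSclosed : IsClosed (Set.Icc ((j:ℝ)*d) T ∩ (fun s => m ((j:ℝ)*d) s) ⁻¹' {lev ℓ}) :=
        (hcont _ h0 hjT).preimage_isClosed_of_isClosed isClosed_Icc isClosed_singleton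
      have hmem := hSclosed.csInf_mem hSne hSbdd
      rw [hmemS] at hmem
      refine ⟨hmem.1, hmem.2, fun s hs1 hs2 => ?_⟩
      exact csInf_le hSbdd ((hmemS s).mpr ⟨hs1, hs2⟩)
    set g : ℕ × ℕ → ℝ × ℝ := fun q =>
      ((q.1:ℝ)*d, if 1 ≤ q.2 ∧ lev q.2 ≤ m ((q.1:ℝ)*d) T then cr q.1 q.2 else T) with hg
    set Δs : Finset (ℝ × ℝ) := (Finset.range N ×ˢ Finset.range n).image g with hΔs
    have hne : Δs.Nonempty := by
      refine Finset.Nonempty.image ⟨(0,0), ?_⟩ _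
      rw [Finset.mem_product]
      exact ⟨Finset.mem_range.mpr hNpos, Finset.mem_range.mpr hn⟩
    have hsub : ↑Δs ⊆ Tri T := by
      intro q hq
      rw [hΔs, Finset.coe_image] at hq
      obtain ⟨⟨j, ℓ⟩, hjl, rfl⟩ := hq
      rw [Finset.mem_coe, Finset.mem_product, Finset.mem_range, Finset.mem_range] at hjl
      obtain ⟨hjN, hln⟩ := hjl
      by_cases hcond : 1 ≤ ℓ ∧ lev ℓ ≤ m ((j:ℝ)*d) T
      · have hgval : g (j, ℓ) = ((j:ℝ)*d, cr j ℓ) := by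
          rw [hg]; dsimp only; rw [if_pos hcond]
        rw [hgval]
        obtain ⟨hic, -, -⟩ := hcross j ℓ hjN hcond.1 hcond.2
        exact ⟨by positivity, hic.1, hic.2⟩
      · have hgval : g (j, ℓ) = ((j:ℝ)*d, T) := by
          rw [hg]; dsimp only; rw [if_neg hcond]
        rw [hgval]
        exact ⟨by positivity, (htj j hjN).le, le_rfl⟩
    refine ⟨Δs, hne, hsub, ?_, ?_⟩
    · have hcard : Δs.card ≤ N * n := by
        calc Δs.card ≤ (Finset.range N ×ˢ Finset.range n).card := Finset.card_image_le
          _ = N * n := by rw [Finset.card_product, Finset.card_range, Finset.card_range]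
      have hcast : (Δs.card : ℝ) ≤ (N:ℝ) * n := by exact_mod_cast hcard
      have key : (N:ℝ) * n ≤ (2*n - 1) * (T*E) + 1 := by
        nlinarith [mul_nonneg (sub_nonneg.mpr hn1) (sub_nonneg.mpr hTE.le)]
      have heq : (2*(n:ℝ) - 1) * T * E + 1 = (2*n - 1) * (T*E) + 1 := by ring
      rw [heq]
      linarith
    · intro y hy p hp
      obtain ⟨hy_dec, hy_inc, hy_diag⟩ := hy
      obtain ⟨p1, p2⟩ := p
      obtain ⟨hp1, hp12, hp2T⟩ := hp
      have hgatele : ∀ q ∈ Δs, |y q.1 q.2 - m q.1 q.2| ≤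
          Δs.sup' hne fun k => |y k.1 k.2 - m k.1 k.2| :=
        fun q hq => Finset.le_sup' (fun k => |y k.1 k.2 - m k.1 k.2|) hq
      have hmem00 : g (0,0) ∈ Δs := by
        rw [hΔs]
        exact Finset.mem_image_of_mem g (Finset.mem_product.mpr
          ⟨Finset.mem_range.mpr hNpos, Finset.mem_range.mpr hn⟩)
      have hgate0 : (0:ℝ) ≤ Δs.sup' hne fun k => |y k.1 k.2 - m k.1 k.2| :=
        le_trans (abs_nonneg _) (hgatele _ hmem00)
      have hy0 : 0 ≤ y p1 p2 := by
        have h := hy_dec p1 p2 p2 hp1 hp12 le_rfl hp2T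
        rw [hy_diag p2 (hp1.trans hp12) hp2T] at h
        exact h
      have h2npos : (0:ℝ) < 2/n := by positivity
      have hinv : (1:ℝ)/n * (n:ℝ) = 1 := by field_simp
      by_cases hp1T : p1 = T
      · have hp2 : p2 = T := le_antisymm hp2T (hp1T ▸ hp12)
        have h1 : y p1 p2 = 0 := by rw [hp1T, hp2]; exact hy_diag T hT.le le_rfl
        have h2 : m p1 p2 = 0 := by rw [hp1T, hp2]; exact hm_diag T hT.le le_rfl
        show |y p1 p2 - m p1 p2| ≤ _
        rw [h1, h2, sub_zero, abs_zero]
        linarith only [hgate0, h2npos]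
      have hp1ltT : p1 < T := lt_of_le_of_ne (hp12.trans hp2T) hp1T
      set i : ℕ := ⌊p1 / d⌋₊ with hi
      have hfl := Nat.floor_le (show (0:ℝ) ≤ p1/d by positivity)
      have hfl2 := Nat.lt_floor_add_one (p1/d)
      have hid : (i:ℝ)*d ≤ p1 := by
        rw [hi]
        calc (⌊p1/d⌋₊:ℝ)*d ≤ (p1/d)*d := mul_le_mul_of_nonneg_right hfl hdpos.le
          _ = p1 := by field_simp
      have hid2 : p1 < ((i:ℝ)+1)*d := by
        rw [hi]
        calc p1 = (p1/d)*d := by field_simp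
          _ < ((⌊p1/d⌋₊:ℝ)+1)*d := mul_lt_mul_of_pos_right hfl2 hdpos
      have hiN : i < N := hjN_of i (lt_of_le_of_lt hid hp1ltT)
      have hti0 : (0:ℝ) ≤ (i:ℝ)*d := by positivity
      have htip2 : (i:ℝ)*d ≤ p2 := hid.trans hp12
      set u : ℝ := min (((i:ℝ)+1)*d) p2 with hu
      have hu1 : p1 ≤ u := le_min hid2.le hp12
      have hu2 : u ≤ p2 := min_le_right _ _
      have hu0 : (0:ℝ) ≤ u := hp1.trans hu1
      have htiu : (i:ℝ)*d ≤ u := hid.trans hu1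
      have hud : u - (i:ℝ)*d ≤ d := by
        have h : u ≤ ((i:ℝ)+1)*d := min_le_left _ _
        linarith
      have hAB : m ((i:ℝ)*d) p2 - m u p2 ≤ 1/n := by
        have h := hmH ((i:ℝ)*d) u p2 hti0 htiu hu2 hp2T
        exact h.trans (hkey _ (by linarith only [htiu]) hud)
      have hA0 : 0 ≤ m ((i:ℝ)*d) p2 := hm0 _ _ hti0 htip2 hp2T
      have hmpA : m p1 p2 ≤ m ((i:ℝ)*d) p2 := hm_dec ((i:ℝ)*d) p1 p2 hti0 hid hp12 hp2T
      have hBmp : m u p2 ≤ m p1 p2 := hm_dec p1 u p2 hp1 hu1 hu2 hp2T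
      have hupper : y p1 p2 - m p1 p2 ≤
          (Δs.sup' hne fun k => |y k.1 k.2 - m k.1 k.2|) + 2/n := by
        by_cases htop : m ((i:ℝ)*d) T ≤ m ((i:ℝ)*d) p2 + 1/n
        · have hmem : g (i, 0) ∈ Δs := by
            rw [hΔs]
            exact Finset.mem_image_of_mem g (Finset.mem_product.mpr
              ⟨Finset.mem_range.mpr hiN, Finset.mem_range.mpr hn⟩)
          have hgval : g (i, 0) = ((i:ℝ)*d, T) := by
            rw [hg]; dsimp only
            rw [if_neg (by simp)]
          have hyle : y p1 p2 ≤ y ((i:ℝ)*d) T :=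
            le_trans (hy_dec ((i:ℝ)*d) p1 p2 hti0 hid hp12 hp2T)
              (hy_inc ((i:ℝ)*d) p2 T hti0 htip2 hp2T le_rfl)
          have hgg : |y ((i:ℝ)*d) T - m ((i:ℝ)*d) T| ≤
              Δs.sup' hne fun k => |y k.1 k.2 - m k.1 k.2| := by
            have h := hgatele _ hmem
            rw [hgval] at h
            exact h
          have habs := le_abs_self (y ((i:ℝ)*d) T - m ((i:ℝ)*d) T)
          linarith only [hyle, hgg, habs, htop, hBmp, hAB, h2n]
        · push_neg at htop
          set ℓ : ℕ := ⌊(n:ℝ) * m ((i:ℝ)*d) p2⌋₊ + 1 with hℓ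
          have hflA := Nat.floor_le (show (0:ℝ) ≤ (n:ℝ) * m ((i:ℝ)*d) p2 by positivity)
          have hflA2 := Nat.lt_floor_add_one ((n:ℝ) * m ((i:ℝ)*d) p2)
          have hℓ1 : lev ℓ ≤ m ((i:ℝ)*d) p2 + 1/n := by
            simp only [hlev]
            rw [hℓ, div_le_iff₀ hn']
            push_cast
            have hexp : (m ((i:ℝ)*d) p2 + 1/n) * n = m ((i:ℝ)*d) p2 * n + 1 := by
              field_simp
            rw [hexp]
            linarith only [hflA]
          have hℓ2 : m ((i:ℝ)*d) p2 < lev ℓ := by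
            simp only [hlev]
            rw [hℓ, lt_div_iff₀ hn']
            push_cast
            linarith only [hflA2]
          have hcond : 1 ≤ ℓ ∧ lev ℓ ≤ m ((i:ℝ)*d) T :=
            ⟨by omega, le_of_lt (lt_of_le_of_lt hℓ1 htop)⟩
          have hmT1 : m ((i:ℝ)*d) T ≤ 1 := hmle1 _ _ hti0 (htj i hiN).le le_rfl
          have hℓn : ℓ < n := by
            have hlt : lev ℓ < 1 := by linarith only [hℓ1, htop, hmT1]
            simp only [hlev] at hlt
            rw [div_lt_one hn'] at hlt
            exact_mod_cast hlt
          have hmem : g (i, ℓ) ∈ Δs := by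
            rw [hΔs]
            exact Finset.mem_image_of_mem g (Finset.mem_product.mpr
              ⟨Finset.mem_range.mpr hiN, Finset.mem_range.mpr hℓn⟩)
          obtain ⟨hcic, hcval, -⟩ := hcross i ℓ hiN hcond.1 hcond.2
          have hgval : g (i, ℓ) = ((i:ℝ)*d, cr i ℓ) := by
            rw [hg]; dsimp only
            rw [if_pos hcond]
          have hct2 : p2 ≤ cr i ℓ := by
            by_contra hcon
            push_neg at hcon
            have h := hm_inc ((i:ℝ)*d) (cr i ℓ) p2 hti0 hcic.1 hcon.le hp2T
            rw [hcval] at h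
            linarith only [h, hℓ2]
          have hyle : y p1 p2 ≤ y ((i:ℝ)*d) (cr i ℓ) :=
            le_trans (hy_dec ((i:ℝ)*d) p1 p2 hti0 hid hp12 hp2T)
              (hy_inc ((i:ℝ)*d) p2 (cr i ℓ) hti0 htip2 hct2 hcic.2)
          have hgg : |y ((i:ℝ)*d) (cr i ℓ) - m ((i:ℝ)*d) (cr i ℓ)| ≤
              Δs.sup' hne fun k => |y k.1 k.2 - m k.1 k.2| := by
            have h := hgatele _ hmem
            rw [hgval] at h
            exact h
          have habs := le_abs_self (y ((i:ℝ)*d) (cr i ℓ) - m ((i:ℝ)*d) (cr i ℓ))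
          linarith only [hcval.le, hcval.ge, hyle, hgg, habs, hℓ1, hBmp, hAB, h2n]
      have hlower : m p1 p2 - y p1 p2 ≤
          (Δs.sup' hne fun k => |y k.1 k.2 - m k.1 k.2|) + 2/n := by
        by_cases hlowc : (n:ℝ) * m u p2 ≤ 1
        · have hBle : m u p2 ≤ 1/n := by
            rw [le_div_iff₀ hn']
            linarith only [hlowc]
          linarith only [hBle, hmpA, hAB, hy0, hgate0, h2n]
        · push_neg at hlowc
          have hB1 : m u p2 ≤ 1 := hmle1 u p2 hu0 hu2 hp2T
          have hnm : (n:ℝ) * m u p2 ≤ (n:ℝ) := by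
            have hx := mul_le_mul_of_nonneg_left hB1 hn'.le
            rwa [mul_one] at hx
          have hnR2 : (1:ℝ) < n := by linarith only [hlowc, hnm]
          have hn2 : 2 ≤ n := by
            have h : 1 < n := by exact_mod_cast hnR2
            omega
          have hB0 : 0 < m u p2 := by
            by_contra hcon
            push_neg at hcon
            have hx := mul_nonpos_of_nonneg_of_nonpos hn'.le hcon
            linarith only [hlowc, hx]
          have hup2 : u < p2 := by
            rcases lt_or_eq_of_le hu2 with h | h
            · exact h
            · exfalso
              rw [h, hm_diag p2 (hp1.trans hp12) hp2T] at hB0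
              exact lt_irrefl 0 hB0
          have huid : u = ((i:ℝ)+1)*d := by
            rw [hu]
            apply min_eq_left
            by_contra hcon
            push_neg at hcon
            have h : u = p2 := by rw [hu]; exact min_eq_right hcon.le
            exact absurd h hup2.ne
          have hcast1 : (((i+1:ℕ)):ℝ) = (i:ℝ)+1 := by push_cast; ring
          have hjd : ((i+1:ℕ):ℝ)*d = u := by rw [hcast1, ← huid]
          have hjd0 : (0:ℝ) ≤ ((i+1:ℕ):ℝ)*d := by positivity
          have hjN : i + 1 < N := by
            apply hjN_of
            rw [hjd]
            exact lt_of_lt_of_le hup2 hp2T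
          set ℓ' : ℕ := min ⌊(n:ℝ) * m u p2⌋₊ (n-1) with hℓ'
          have hflB := Nat.floor_le (show (0:ℝ) ≤ (n:ℝ) * m u p2 by positivity)
          have hflB2 := Nat.lt_floor_add_one ((n:ℝ) * m u p2)
          have hℓ'1 : 1 ≤ ℓ' := by
            apply le_min
            · apply Nat.le_floor
              push_cast
              linarith only [hlowc]
            · omega
          have hℓ'n : ℓ' < n := lt_of_le_of_lt (min_le_right _ _) (by omega)
          have hℓ'le : ((ℓ':ℕ):ℝ) ≤ (n:ℝ) * m u p2 := by
            have h : ℓ' ≤ ⌊(n:ℝ) * m u p2⌋₊ := min_le_left _ _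
            calc ((ℓ':ℕ):ℝ) ≤ (⌊(n:ℝ) * m u p2⌋₊:ℝ) := by exact_mod_cast h
              _ ≤ (n:ℝ) * m u p2 := hflB
          have hℓ'ge : (n:ℝ) * m u p2 - 1 ≤ ((ℓ':ℕ):ℝ) := by
            rcases le_total ⌊(n:ℝ) * m u p2⌋₊ (n-1) with h | h
            · rw [hℓ', min_eq_left h]
              linarith only [hflB2]
            · rw [hℓ', min_eq_right h]
              have hc : ((n-1:ℕ):ℝ) = (n:ℝ) - 1 := by
                have h1 : (1:ℕ) ≤ n := hn
                push_cast [h1]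
                ring
              rw [hc]
              linarith only [hnm]
          have hlevleB : lev ℓ' ≤ m u p2 := by
            simp only [hlev]
            rw [div_le_iff₀ hn']
            linarith only [hℓ'le]
          have hlevgeB : m u p2 - 1/n ≤ lev ℓ' := by
            simp only [hlev]
            rw [le_div_iff₀ hn']
            have hexp : (m u p2 - 1/n) * n = m u p2 * n - 1 := by field_simp
            rw [hexp]
            linarith only [hℓ'ge]
          have hcondj : 1 ≤ ℓ' ∧ lev ℓ' ≤ m (((i+1:ℕ):ℝ)*d) T := by
            refine ⟨hℓ'1, ?_⟩
            have h1 : ((i+1:ℕ):ℝ)*d ≤ p2 := by rw [hjd]; exact hu2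
            have h2 := hm_inc (((i+1:ℕ):ℝ)*d) p2 T hjd0 h1 hp2T le_rfl
            have h3 : m (((i+1:ℕ):ℝ)*d) p2 = m u p2 := by rw [hjd]
            linarith only [hlevleB, h2, h3]
          obtain ⟨hcic, hcval, hcmin⟩ := hcross (i+1) ℓ' hjN hℓ'1 hcondj.2
          have hcle : cr (i+1) ℓ' ≤ p2 := by
            have hjp2 : ((i+1:ℕ):ℝ)*d ≤ p2 := by rw [hjd]; exact hu2
            have hiv := intermediate_value_Icc hjp2
              ((hcont _ hjd0 ((htj _ hjN).le)).mono (Set.Icc_subset_Icc le_rfl hp2T))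
            have hmm : lev ℓ' ∈ Set.Icc (m (((i+1:ℕ):ℝ)*d) (((i+1:ℕ):ℝ)*d))
                (m (((i+1:ℕ):ℝ)*d) p2) := by
              rw [hm_diag _ hjd0 (hjp2.trans hp2T)]
              refine ⟨by simp only [hlev]; positivity, ?_⟩
              rw [hjd]
              exact hlevleB
            obtain ⟨s, hs1, hs2⟩ := hiv hmm
            exact (hcmin s ⟨hs1.1, hs1.2.trans hp2T⟩ hs2).trans hs1.2
          have hmem : g (i+1, ℓ') ∈ Δs := by
            rw [hΔs]
            exact Finset.mem_image_of_mem g (Finset.mem_product.mpr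
              ⟨Finset.mem_range.mpr hjN, Finset.mem_range.mpr hℓ'n⟩)
          have hgval : g (i+1, ℓ') = (((i+1:ℕ):ℝ)*d, cr (i+1) ℓ') := by
            rw [hg]; dsimp only
            rw [if_pos hcondj]
          have hp1jd : p1 ≤ ((i+1:ℕ):ℝ)*d := by rw [hjd]; exact hu1
          have hyge : y (((i+1:ℕ):ℝ)*d) (cr (i+1) ℓ') ≤ y p1 p2 := by
            have h1 : y (((i+1:ℕ):ℝ)*d) (cr (i+1) ℓ') ≤ y p1 (cr (i+1) ℓ') :=
              hy_dec p1 (((i+1:ℕ):ℝ)*d) (cr (i+1) ℓ') hp1 hp1jd hcic.1 hcic.2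
            have h2 : y p1 (cr (i+1) ℓ') ≤ y p1 p2 :=
              hy_inc p1 (cr (i+1) ℓ') p2 hp1 (hp1jd.trans hcic.1) hcle hp2T
            exact h1.trans h2
          have hgg : |y (((i+1:ℕ):ℝ)*d) (cr (i+1) ℓ') - m (((i+1:ℕ):ℝ)*d) (cr (i+1) ℓ')| ≤
              Δs.sup' hne fun k => |y k.1 k.2 - m k.1 k.2| := by
            have h := hgatele _ hmem
            rw [hgval] at h
            exact h
          have habs : m (((i+1:ℕ):ℝ)*d) (cr (i+1) ℓ') - y (((i+1:ℕ):ℝ)*d) (cr (i+1) ℓ') ≤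
              |y (((i+1:ℕ):ℝ)*d) (cr (i+1) ℓ') - m (((i+1:ℕ):ℝ)*d) (cr (i+1) ℓ')| := by
            rw [abs_sub_comm]
            exact le_abs_self _
          linarith only [hcval.le, hcval.ge, hgg, habs, hyge, hmpA, hAB, hlevgeB, h2n]
      exact abs_sub_le_iff.mpr ⟨hupper, hlower⟩
end

section
/- Let Y be a random variable taking values in 𝒟 (functions on Δ = {(t₁,t₂) : 0 ≤ t₁ ≤ t₂ ≤ T}, non-increasing in t₁, non-decreasing in t₂, vanishing on the diagonal), with E[Y(0,T)] > 0, and suppose |E[Y(t₁,t₂)] − E[Y(s₁,s₂)]| ≤ C·E[Y(0,T)]·(|t₁−s₁|^r + |t₂−s₂|^r) for some r, C > 0 and all points of Δ. Then for any n ∈ ℕ and q ≥ 1: E[ sup_{(t₁,t₂)∈Δ} |Y(t₁,t₂) − E[Y(t₁,t₂)]|^q ] ≤ 2^{q−1}·((2n−1)·T·(Cn)^{1/r} + 1)·sup_{(t₁,t₂)∈Δ} E[|Y(t₁,t₂) − E[Y(t₁,t₂)]|^q] + 2^{q−1}·(2/n)^q·E[Y(0,T)]^q. -/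
open MeasureTheory

lemma two_rpow_aux (u w p : ℝ) (hu : 0 ≤ u) (hw : 0 ≤ w) (hp : 1 ≤ p) :
    (u + w) ^ p ≤ 2 ^ (p - 1) * (u ^ p + w ^ p) := by
  lift u to NNReal using hu
  lift w to NNReal using hw
  exact_mod_cast NNReal.rpow_add_le_mul_rpow_add_rpow u w hp

lemma exists_level (a y : ℝ) (n : ℕ) (hn : 0 < n) (h0 : 0 ≤ y) (h1 : y ≤ a) :
    ∃ k : ℕ, k + 1 ≤ n ∧ (k : ℝ) * (a / n) ≤ y ∧
      (k + 1 = n ∨ y < ((k : ℝ) + 1) * (a / n)) := by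
  have hn' : (0:ℝ) < n := by exact_mod_cast hn
  have hna : ((n - 1 : ℕ) : ℝ) = (n:ℝ) - 1 := by
    have : (1:ℕ) ≤ n := hn
    push_cast [this]; ring
  rcases le_or_gt a 0 with ha | ha
  · refine ⟨n - 1, by omega, ?_, Or.inl (by omega)⟩
    have hy : y = 0 := le_antisymm (h1.trans ha) h0
    have : (a / n) ≤ 0 := div_nonpos_of_nonpos_of_nonneg ha hn'.le
    rw [hy, hna]
    nlinarith
  · have hd : (0:ℝ) < a / n := div_pos ha hn'
    set k₀ := ⌊y / (a / n)⌋₊ with hk₀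
    have hfl : (k₀ : ℝ) ≤ y / (a / n) := Nat.floor_le (by positivity)
    have hfu : y / (a / n) < (k₀ : ℝ) + 1 := Nat.lt_floor_add_one _
    have hyd : y / (a/n) * (a/n) = y := by field_simp
    rcases lt_or_ge k₀ n with hlt | hge
    · refine ⟨k₀, by omega, ?_, ?_⟩
      · nlinarith
      · rcases eq_or_lt_of_le (Nat.succ_le_of_lt hlt) with he | hlt2
        · exact Or.inl he
        · exact Or.inr (by nlinarith)
    · refine ⟨n - 1, by omega, ?_, Or.inl (by omega)⟩
      have h2 : (n:ℝ) ≤ y / (a/n) := le_trans (by exact_mod_cast hge) hfl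
      rw [hna]
      nlinarith


lemma sSup_level (f : ℝ → ℝ) (v lam L r : ℝ) (hv : 0 ≤ v) (hr : 0 < r) (hL : 0 < L)
    (hH : ∀ s t, s ∈ Set.Icc 0 v → t ∈ Set.Icc 0 v → |f s - f t| ≤ L * |s - t| ^ r)
    (hfv : f v = 0) (hlam : 0 < lam) :
    ∃ cpt, cpt ∈ Set.Icc 0 v ∧ f cpt ≤ lam ∧
      (∀ t₀ ∈ Set.Icc 0 v, lam ≤ f t₀ → t₀ ≤ cpt ∧ lam ≤ f cpt) ∧
      (∀ t₀, 0 ≤ t₀ → (∀ t ∈ Set.Icc 0 v, lam ≤ f t → t ≤ t₀) → cpt ≤ t₀) := by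
  set A : Set ℝ := {t | t ∈ Set.Icc 0 v ∧ lam ≤ f t} with hA
  set S : Set ℝ := {0} ∪ A with hS
  have hSne : S.Nonempty := ⟨0, Or.inl rfl⟩
  have hSub : ∀ s ∈ S, s ≤ v := by
    rintro s (rfl | ⟨⟨_, h⟩, _⟩); exacts [hv, h]
  have hSbdd : BddAbove S := ⟨v, hSub⟩
  set cpt := sSup S with hcpt
  have h0c : 0 ≤ cpt := le_csSup hSbdd (Or.inl rfl)
  have hcv : cpt ≤ v := csSup_le hSne hSub
  have hmem : cpt ∈ Set.Icc 0 v := ⟨h0c, hcv⟩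
  -- key continuity gadget
  have heta : ∀ e : ℝ, 0 < e → ∃ η : ℝ, 0 < η ∧ L * η ^ r = e / 2 := by
    intro e he
    refine ⟨(e / (2 * L)) ^ (1/r), Real.rpow_pos_of_pos (by positivity) _, ?_⟩
    rw [one_div, Real.rpow_inv_rpow (by positivity) hr.ne']
    field_simp
  refine ⟨cpt, hmem, ?_, ?_, ?_⟩
  ·
    -- f cpt ≤ lam
    by_contra hcon
    push_neg at hcon
    have hcvlt : cpt < v := by
      rcases eq_or_lt_of_le hcv with he | h
      · exfalso; rw [he, hfv] at hcon; linarith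
      · exact h
    obtain ⟨η, hη, hηe⟩ := heta (f cpt - lam) (by linarith)
    set t := min v (cpt + η) with ht
    have hct : cpt < t := lt_min hcvlt (by linarith)
    have htm : t ∈ Set.Icc 0 v := ⟨le_trans h0c hct.le, min_le_left _ _⟩
    have hdist : |t - cpt| ≤ η := by
      rw [abs_of_nonneg (by linarith)]
      have := min_le_right v (cpt + η)
      linarith
    have hHd : |f t - f cpt| ≤ (f cpt - lam) / 2 := by
      calc |f t - f cpt| ≤ L * |t - cpt| ^ r := hH t cpt htm hmem
        _ ≤ L * η ^ r := by gcongr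
        _ = (f cpt - lam) / 2 := hηe
    have : lam ≤ f t := by
      have := abs_le.1 hHd
      linarith [this.1]
    have : t ∈ S := Or.inr ⟨htm, this⟩
    have := le_csSup hSbdd this
    linarith
  ·
    intro t₀ hmem₀ hft₀
    have htA : t₀ ∈ A := ⟨hmem₀, hft₀⟩
    have h1 : t₀ ≤ cpt := le_csSup hSbdd (Or.inr htA)
    refine ⟨h1, ?_⟩
    by_contra hcon
    push_neg at hcon
    obtain ⟨η, hη, hηe⟩ := heta (lam - f cpt) (by linarith)
    have hAne : A.Nonempty := ⟨t₀, htA⟩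
    have hAbdd : BddAbove A := ⟨v, fun s hs => hs.1.2⟩
    have hbc : sSup A = cpt := by
      apply le_antisymm
      · exact csSup_le_csSup hSbdd hAne (Set.subset_union_right)
      · apply csSup_le hSne
        rintro s (rfl | hsA)
        · exact le_trans hmem₀.1 (le_csSup hAbdd htA)
        · exact le_csSup hAbdd hsA
    obtain ⟨s, hsA, hs_gt⟩ := exists_lt_of_lt_csSup hAne (show cpt - η < sSup A by rw [hbc]; linarith)
    have hs_le : s ≤ cpt := le_csSup hSbdd (Or.inr hsA)
    have hHd : |f s - f cpt| ≤ (lam - f cpt) / 2 := by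
      calc |f s - f cpt| ≤ L * |s - cpt| ^ r := hH s cpt hsA.1 hmem
        _ ≤ L * η ^ r := by
            gcongr
            rw [abs_of_nonpos (by linarith)]; linarith
        _ = (lam - f cpt) / 2 := hηe
    have := abs_le.1 hHd
    have := hsA.2
    linarith [this]
  ·
    intro t₀ ht₀ hub
    exact csSup_le hSne (by rintro s (rfl | hsA); exacts [ht₀, hub s hsA.1 hsA.2])

lemma memD_nonneg {T : ℝ} {z : ℝ → ℝ → ℝ} (h : MemD T z) {t₁ t₂ : ℝ}
    (h1 : 0 ≤ t₁) (h2 : t₁ ≤ t₂) (h3 : t₂ ≤ T) : 0 ≤ z t₁ t₂ := by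
  have := h.1 t₁ t₂ t₂ h1 h2 le_rfl h3
  rw [h.2.2 t₂ (h1.trans h2) h3] at this
  exact this

lemma memD_le_top {T : ℝ} {z : ℝ → ℝ → ℝ} (h : MemD T z) {t₁ t₂ : ℝ}
    (h1 : 0 ≤ t₁) (h2 : t₁ ≤ t₂) (h3 : t₂ ≤ T) : z t₁ t₂ ≤ z 0 T :=
  le_trans (h.1 0 t₁ t₂ le_rfl h1 h2 h3) (h.2.1 0 t₂ T le_rfl (h1.trans h2) h3 le_rfl)


set_option maxHeartbeats 2000000 in
lemma chaining (T C r a : ℝ) (hT : 0 < T) (hC : 0 < C) (hr : 0 < r) (ha : 0 < a)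
    (m : ℝ → ℝ → ℝ) (hm : MemD T m) (hma : m 0 T = a)
    (hH : ∀ p q : ℝ × ℝ, p ∈ Tri T → q ∈ Tri T →
      |m p.1 p.2 - m q.1 q.2| ≤ C * a * (|p.1 - q.1| ^ r + |p.2 - q.2| ^ r))
    (n : ℕ) (hn : 0 < n) :
    ∃ F : Finset (ℝ × ℝ), F.Nonempty ∧ (∀ p ∈ F, p ∈ Tri T) ∧
      (F.card : ℝ) ≤ (2 * n - 1) * T * (C * n) ^ (1/r) + 1 ∧
      ∀ z, MemD T z → ∀ t₁ t₂, (t₁, t₂) ∈ Tri T →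
        (∃ p ∈ F, z t₁ t₂ - m t₁ t₂ ≤ |z p.1 p.2 - m p.1 p.2| + 2 * a / n) ∧
        (∃ p ∈ F, m t₁ t₂ - z t₁ t₂ ≤ |z p.1 p.2 - m p.1 p.2| + 2 * a / n) := by
  have hn' : (0:ℝ) < n := by exact_mod_cast hn
  have hn1 : (1:ℝ) ≤ n := by exact_mod_cast hn
  have han : 0 < a / n := div_pos ha hn'
  have h2an : 2 * a / (n:ℝ) = a / n + a / n := by ring
  obtain ⟨hm1, hm2, hm3⟩ := hm
  have hm0 : ∀ t₁ t₂, 0 ≤ t₁ → t₁ ≤ t₂ → t₂ ≤ T → 0 ≤ m t₁ t₂ := by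
    intro t₁ t₂ h1 h2 h3
    have := hm1 t₁ t₂ t₂ h1 h2 le_rfl h3
    rw [hm3 t₂ (h1.trans h2) h3] at this
    exact this
  have hmub : ∀ t₁ t₂, 0 ≤ t₁ → t₁ ≤ t₂ → t₂ ≤ T → m t₁ t₂ ≤ a := by
    intro t₁ t₂ h1 h2 h3
    calc m t₁ t₂ ≤ m 0 t₂ := hm1 0 t₁ t₂ le_rfl h1 h2 h3
      _ ≤ m 0 T := hm2 0 t₂ T le_rfl (h1.trans h2) h3 le_rfl
      _ = a := hma
  have hzr : |(0:ℝ)| ^ r = 0 := by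
    rw [abs_zero, Real.zero_rpow hr.ne']
  have hHh : ∀ s t u : ℝ, (s, u) ∈ Tri T → (t, u) ∈ Tri T →
      |m s u - m t u| ≤ C * a * |s - t| ^ r := by
    intro s t u h1 h2
    have := hH (s, u) (t, u) h1 h2
    simpa [sub_self, abs_zero, Real.zero_rpow hr.ne'] using this
  have hHv : ∀ t u u' : ℝ, (t, u) ∈ Tri T → (t, u') ∈ Tri T →
      |m t u - m t u'| ≤ C * a * |u - u'| ^ r := by
    intro t u u' h1 h2
    have := hH (t, u) (t, u') h1 h2
    simpa [sub_self, abs_zero, Real.zero_rpow hr.ne'] using this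
  have hcn : (0:ℝ) < C * n := by positivity
  set x := T * (C * (n:ℝ)) ^ (1/r) with hxdef
  have hx : 0 < x := by
    have := Real.rpow_pos_of_pos hcn (1/r)
    positivity
  have hCd : ∀ δ : ℝ, 0 ≤ δ → δ * (C * (n:ℝ)) ^ (1/r) ≤ 1 → C * a * δ ^ r ≤ a / n := by
    intro δ h0 h1
    have h2 : (δ * (C * (n:ℝ)) ^ (1/r)) ^ r ≤ 1 := by
      calc (δ * (C * (n:ℝ)) ^ (1/r)) ^ r ≤ 1 ^ r := by
            apply Real.rpow_le_rpow (by positivity) h1 hr.le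
        _ = 1 := Real.one_rpow r
    rw [Real.mul_rpow h0 (Real.rpow_nonneg hcn.le _), one_div,
      Real.rpow_inv_rpow hcn.le hr.ne'] at h2
    have hδr : 0 ≤ δ ^ r := Real.rpow_nonneg h0 r
    rw [le_div_iff₀ hn']
    nlinarith
  have lamsucc : ∀ k : ℕ, ((k:ℝ)+1) * (a/n) - (k:ℝ) * (a/n) = a / n := by intro k; ring
  by_cases hxle : x ≤ 1
  · -- single point (0, T)
    refine ⟨{((0:ℝ), T)}, Finset.singleton_nonempty _, ?_, ?_, ?_⟩
    · intro p hp
      rw [Finset.mem_singleton] at hp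
      subst hp
      exact ⟨le_rfl, hT.le, le_rfl⟩
    · have h2n1 : (1:ℝ) ≤ 2 * n - 1 := by linarith
      simp only [Finset.card_singleton, Nat.cast_one]
      have : (2 * (n:ℝ) - 1) * T * (C * n) ^ (1/r) = (2*(n:ℝ)-1) * x := by
        rw [hxdef]; ring
      rw [this]
      nlinarith
    · intro z hz t₁ t₂ htri
      obtain ⟨h1, h12, h2T⟩ : 0 ≤ t₁ ∧ t₁ ≤ t₂ ∧ t₂ ≤ T := htri
      obtain ⟨hz1, hz2, hz3⟩ := hz
      have hTmem : ((0:ℝ), T) ∈ Tri T := ⟨le_rfl, hT.le, le_rfl⟩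
      have htmem : (t₁, t₂) ∈ Tri T := ⟨h1, h12, h2T⟩
      have hkey : C * a * T ^ r ≤ a / n := hCd T hT.le (le_of_eq_of_le (by rw [hxdef]) hxle)
      have hznn : 0 ≤ z t₁ t₂ := by
        have := hz1 t₁ t₂ t₂ h1 h12 le_rfl h2T
        rw [hz3 t₂ (h1.trans h12) h2T] at this
        exact this
      constructor
      · refine ⟨((0:ℝ), T), Finset.mem_singleton_self _, ?_⟩
        have hzu : z t₁ t₂ ≤ z 0 T :=
          le_trans (hz1 0 t₁ t₂ le_rfl h1 h12 h2T) (hz2 0 t₂ T le_rfl (h1.trans h12) h2T le_rfl)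
        have hmd : m 0 T - m t₁ t₂ ≤ a/n + a/n := by
          have hb := hH ((0:ℝ), T) (t₁, t₂) hTmem htmem
          simp only at hb
          have e1 : |(0:ℝ) - t₁| ^ r ≤ T ^ r := by
            apply Real.rpow_le_rpow (abs_nonneg _) _ hr.le
            rw [abs_sub_comm, sub_zero, abs_of_nonneg h1]; linarith
          have e2 : |T - t₂| ^ r ≤ T ^ r := by
            apply Real.rpow_le_rpow (abs_nonneg _) _ hr.le
            rw [abs_of_nonneg (by linarith)]; linarith [h1.trans h12]
          have h3 := mul_le_mul_of_nonneg_left (add_le_add e1 e2)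
            (by positivity : (0:ℝ) ≤ C * a)
          have := abs_le.1 hb
          linarith [this.2, hkey]
        have := le_abs_self (z 0 T - m 0 T)
        simp only
        rw [h2an]
        linarith
      · refine ⟨((0:ℝ), T), Finset.mem_singleton_self _, ?_⟩
        have hmd : m t₁ t₂ ≤ a / n := by
          have hb := hHh t₁ t₂ t₂ htmem ⟨h1.trans h12, le_rfl, h2T⟩
          rw [hm3 t₂ (h1.trans h12) h2T, sub_zero] at hb
          have e1 : |t₁ - t₂| ^ r ≤ T ^ r := by
            apply Real.rpow_le_rpow (abs_nonneg _) _ hr.le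
            rw [abs_sub_comm, abs_of_nonneg (by linarith)]; linarith
          calc m t₁ t₂ ≤ |m t₁ t₂| := le_abs_self _
            _ ≤ C * a * |t₁ - t₂| ^ r := hb
            _ ≤ C * a * T ^ r := mul_le_mul_of_nonneg_left e1 (by positivity)
            _ ≤ a / n := hkey
        simp only
        rw [h2an]
        have : (0:ℝ) ≤ |z 0 T - m 0 T| := abs_nonneg _
        linarith
  · -- many points
    push_neg at hxle
    obtain ⟨K, hKdef⟩ : ∃ K : ℕ, K = ⌈x⌉₊ := ⟨_, rfl⟩
    have hK0 : 0 < K := by rw [hKdef]; exact Nat.ceil_pos.mpr hx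
    have hKx : x ≤ (K:ℝ) := by rw [hKdef]; exact Nat.le_ceil x
    have hKx1 : (K:ℝ) ≤ x + 1 := by rw [hKdef]; exact (Nat.ceil_lt_add_one hx.le).le
    have hK' : (0:ℝ) < K := by exact_mod_cast hK0
    obtain ⟨δ, hδdef⟩ : ∃ δ : ℝ, δ = T / K := ⟨_, rfl⟩
    have hδ : 0 < δ := by rw [hδdef]; exact div_pos hT hK'
    have hKδ : (K:ℝ) * δ = T := by rw [hδdef]; field_simp
    have hCδ : C * a * δ ^ r ≤ a / n := by
      apply hCd δ hδ.le
      have : δ * (C * (n:ℝ)) ^ (1/r) = x / K := by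
        rw [hδdef, hxdef]; ring
      rw [this, div_le_one hK']
      exact hKx
    have hrw : ∀ w : ℝ, 0 ≤ w → w ≤ δ → C * a * w ^ r ≤ a / n := by
      intro w h0 h1
      refine le_trans ?_ hCδ
      apply mul_le_mul_of_nonneg_left _ (by positivity)
      exact Real.rpow_le_rpow h0 h1 hr.le
    -- the level-crossing points, one for each column j and level k ≥ 1
    have Hc : ∀ j k : ℕ, 1 ≤ j → j ≤ K → 1 ≤ k →
        ∃ cpt, cpt ∈ Set.Icc 0 ((j:ℝ)*δ) ∧ m cpt ((j:ℝ)*δ) ≤ (k:ℝ)*(a/n) ∧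
          (∀ t₀ ∈ Set.Icc 0 ((j:ℝ)*δ), (k:ℝ)*(a/n) ≤ m t₀ ((j:ℝ)*δ) →
            t₀ ≤ cpt ∧ (k:ℝ)*(a/n) ≤ m cpt ((j:ℝ)*δ)) ∧
          (∀ t₀, 0 ≤ t₀ →
            (∀ t ∈ Set.Icc 0 ((j:ℝ)*δ), (k:ℝ)*(a/n) ≤ m t ((j:ℝ)*δ) → t ≤ t₀) → cpt ≤ t₀) := by
      intro j k hj1 hjK hk1
      have hj1' : (1:ℝ) ≤ (j:ℝ) := by exact_mod_cast hj1
      have hjK' : (j:ℝ) ≤ K := by exact_mod_cast hjK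
      have hv0 : 0 < (j:ℝ)*δ := by nlinarith
      have hvT : (j:ℝ)*δ ≤ T := by nlinarith
      have hk1' : (1:ℝ) ≤ (k:ℝ) := by exact_mod_cast hk1
      apply sSup_level (fun t => m t ((j:ℝ)*δ)) ((j:ℝ)*δ) ((k:ℝ)*(a/n)) (C*a) r hv0.le hr
        (by positivity)
      · intro s t hs ht
        exact hHh s t ((j:ℝ)*δ) ⟨hs.1, hs.2, hvT⟩ ⟨ht.1, ht.2, hvT⟩
      · exact hm3 _ hv0.le hvT
      · nlinarith
    choose! cpt hcpt1 hcpt2 hcpt3 hcpt4 using Hc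
    obtain ⟨pt, hpt0, hptk⟩ : ∃ pt : ℕ → ℕ → ℝ, (∀ j, pt j 0 = 0) ∧
        (∀ j k, k ≠ 0 → pt j k = cpt j k) :=
      ⟨fun j k => if k = 0 then 0 else cpt j k, fun j => by simp, fun j k hk => by simp [hk]⟩
    obtain ⟨F, hFdef⟩ : ∃ F : Finset (ℝ × ℝ), F =
        ((Finset.Icc 1 K) ×ˢ Finset.range n).image
          (fun jk => (pt jk.1 jk.2, (jk.1 : ℝ) * δ)) := ⟨_, rfl⟩
    have hmemF : ∀ j k : ℕ, 1 ≤ j → j ≤ K → k < n → (pt j k, (j:ℝ)*δ) ∈ F := by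
      intro j k hj1 hjK hkn
      have hjk : ((j, k) : ℕ × ℕ) ∈ (Finset.Icc 1 K) ×ˢ Finset.range n := by
        rw [Finset.mem_product, Finset.mem_Icc, Finset.mem_range]
        exact ⟨⟨hj1, hjK⟩, hkn⟩
      rw [hFdef]
      exact Finset.mem_image_of_mem _ hjk
    have hptTri : ∀ j k : ℕ, 1 ≤ j → j ≤ K → (pt j k, (j:ℝ)*δ) ∈ Tri T := by
      intro j k hj1 hjK
      have hj1' : (1:ℝ) ≤ (j:ℝ) := by exact_mod_cast hj1
      have hjK' : (j:ℝ) ≤ K := by exact_mod_cast hjK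
      have hv0 : 0 < (j:ℝ)*δ := by nlinarith
      have hvT : (j:ℝ)*δ ≤ T := by nlinarith
      by_cases hk : k = 0
      · subst hk
        exact ⟨by rw [hpt0], by rw [hpt0]; positivity, hvT⟩
      · have h := hcpt1 j k hj1 hjK (by omega)
        rw [hptk j k hk]
        exact ⟨h.1, h.2, hvT⟩
    have hFne : F.Nonempty := ⟨_, hmemF 1 0 le_rfl hK0 hn⟩
    refine ⟨F, hFne, ?_, ?_, ?_⟩
    · intro p hp
      rw [hFdef, Finset.mem_image] at hp
      obtain ⟨⟨j, k⟩, hjk, rfl⟩ := hp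
      rw [Finset.mem_product, Finset.mem_Icc] at hjk
      exact hptTri j k hjk.1.1 hjk.1.2
    · -- cardinality
      have h1 : F.card ≤ K * n := by
        have h0 : F.card ≤ ((Finset.Icc 1 K) ×ˢ Finset.range n).card := by
          rw [hFdef]; exact Finset.card_image_le
        have h0' : ((Finset.Icc 1 K) ×ˢ Finset.range n).card = K * n := by
          rw [Finset.card_product, Nat.card_Icc, Finset.card_range, Nat.add_sub_cancel]
        omega
      have h2 : (F.card : ℝ) ≤ (K:ℝ) * n := by exact_mod_cast h1
      have h3 : (K:ℝ) * n ≤ (x+1) * n := by nlinarith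
      have h4 : (x+1) * (n:ℝ) ≤ (2*(n:ℝ)-1)*x + 1 := by nlinarith
      have : (2 * (n:ℝ) - 1) * T * (C * n) ^ (1/r) = (2*(n:ℝ)-1) * x := by
        rw [hxdef]; ring
      rw [this]
      linarith
    · -- chaining estimate
      intro z hz t₁ t₂ htri
      obtain ⟨h1, h12, h2T⟩ : 0 ≤ t₁ ∧ t₁ ≤ t₂ ∧ t₂ ≤ T := htri
      obtain ⟨hz1, hz2, hz3⟩ := hz
      have htmem : (t₁, t₂) ∈ Tri T := ⟨h1, h12, h2T⟩
      have hznn : 0 ≤ z t₁ t₂ := by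
        have := hz1 t₁ t₂ t₂ h1 h12 le_rfl h2T
        rw [hz3 t₂ (h1.trans h12) h2T] at this
        exact this
      -- trivial bound helper: if m t₁ t₂ ≤ 2a/n then the lower part is trivial
      have htrivlow : m t₁ t₂ ≤ a/n + a/n →
          ∃ p ∈ F, m t₁ t₂ - z t₁ t₂ ≤ |z p.1 p.2 - m p.1 p.2| + 2 * a / n := by
        intro hsm
        obtain ⟨p₀, hp₀⟩ := hFne
        refine ⟨p₀, hp₀, ?_⟩
        have : (0:ℝ) ≤ |z p₀.1 p₀.2 - m p₀.1 p₀.2| := abs_nonneg _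
        rw [h2an]
        linarith
      by_cases ht₂0 : t₂ ≤ 0
      · -- t₂ = 0, so t₁ = 0 and everything vanishes
        have ht₂ : t₂ = 0 := le_antisymm ht₂0 (h1.trans h12)
        have ht₁ : t₁ = 0 := le_antisymm (by linarith) h1
        subst ht₂; subst ht₁
        have hz0 : z 0 0 = 0 := hz3 0 le_rfl hT.le
        have hm0' : m 0 0 = 0 := hm3 0 le_rfl hT.le
        obtain ⟨p₀, hp₀⟩ := hFne
        constructor <;>
          exact ⟨p₀, hp₀, by
            rw [hz0, hm0', h2an]
            have : (0:ℝ) ≤ |z p₀.1 p₀.2 - m p₀.1 p₀.2| := abs_nonneg _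
            linarith⟩
      push_neg at ht₂0
      constructor
      · -- upper bound
        set j := ⌈t₂/δ⌉₊ with hjdef
        have hj1 : 1 ≤ j := Nat.one_le_iff_ne_zero.2 (by
          simp only [hjdef, ne_eq, Nat.ceil_eq_zero, not_le]
          positivity)
        have hjK : j ≤ K := by
          rw [hjdef]
          apply Nat.ceil_le.2
          rw [div_le_iff₀ hδ, hKδ]
          exact h2T
        have hj1' : (1:ℝ) ≤ (j:ℝ) := by exact_mod_cast hj1
        have hjK' : (j:ℝ) ≤ K := by exact_mod_cast hjK
        set v := (j:ℝ) * δ with hvdef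
        have hvt₂ : t₂ ≤ v := by
          have := Nat.le_ceil (t₂/δ)
          rw [hvdef, hjdef]
          calc t₂ = (t₂/δ) * δ := by field_simp
            _ ≤ (⌈t₂/δ⌉₊:ℝ) * δ := by nlinarith
        have hvd : v - t₂ ≤ δ := by
          have := Nat.ceil_lt_add_one (by positivity : (0:ℝ) ≤ t₂/δ)
          have h' : ((j:ℝ)) < t₂/δ + 1 := by exact_mod_cast this
          have : (j:ℝ) * δ < (t₂/δ + 1) * δ := by nlinarith
          have he : (t₂/δ + 1) * δ = t₂ + δ := by field_simp
          rw [hvdef]; linarith [he ▸ this]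
        have hv0 : 0 < v := by rw [hvdef]; nlinarith
        have hvT : v ≤ T := by rw [hvdef]; nlinarith
        have ht₁v : t₁ ≤ v := h12.trans hvt₂
        have hy0 : 0 ≤ m t₁ v := hm0 t₁ v h1 ht₁v hvT
        have hya : m t₁ v ≤ a := hmub t₁ v h1 ht₁v hvT
        obtain ⟨k, hkn, hky, hkalt⟩ := exists_level a (m t₁ v) n hn hy0 hya
        -- choose the grid point s with s ≤ t₁ and m s v - m t₁ v ≤ a/n
        have hs : ∃ s, (s, v) ∈ F ∧ 0 ≤ s ∧ s ≤ t₁ ∧ m s v - m t₁ v ≤ a/n := by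
          rcases eq_or_lt_of_le hkn with hk1n | hkn'
          · -- top level: use s = 0
            refine ⟨0, ?_, le_rfl, h1, ?_⟩
            · have := hmemF j 0 hj1 hjK hn
              rwa [hpt0] at this
            · have hm0v : m 0 v ≤ a := hmub 0 v le_rfl hv0.le hvT
              have hkr : (k:ℝ) = (n:ℝ) - 1 := by
                have : ((k:ℝ)+1) = (n:ℝ) := by exact_mod_cast hk1n
                linarith
              rw [hkr] at hky
              have : ((n:ℝ)-1) * (a/n) = a - a/n := by field_simp
              rw [this] at hky
              linarith
          · -- use the level-crossing point for level k+1
            have hklt2 : m t₁ v < ((k:ℝ)+1)*(a/n) := hkalt.resolve_left (by omega)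
            refine ⟨cpt j (k+1), ?_, ?_, ?_, ?_⟩
            · have := hmemF j (k+1) hj1 hjK hkn'
              rwa [hptk j (k+1) (by omega)] at this
            · exact (hcpt1 j (k+1) hj1 hjK (by omega)).1
            · apply hcpt4 j (k+1) hj1 hjK (by omega) t₁ h1
              intro t htm hft
              by_contra hcon
              push_neg at hcon
              have := hm1 t₁ t v h1 hcon.le htm.2 hvT
              push_cast at hft
              linarith [hklt2]
            · have := hcpt2 j (k+1) hj1 hjK (by omega)
              have hsucc : (((k+1:ℕ)):ℝ) * (a/n) = ((k:ℝ)+1) * (a/n) := by push_cast; ring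
              rw [hsucc] at this
              linarith [lamsucc k]
        obtain ⟨s, hsF, hs0, hst₁, hsv⟩ := hs
        refine ⟨(s, v), hsF, ?_⟩
        simp only
        have hzu : z t₁ t₂ ≤ z s v :=
          le_trans (hz2 t₁ t₂ v h1 h12 hvt₂ hvT) (hz1 s t₁ v hs0 hst₁ ht₁v hvT)
        have hvert : m t₁ v - m t₁ t₂ ≤ a/n := by
          have hb := hHv t₁ v t₂ ⟨h1, ht₁v, hvT⟩ htmem
          have e1 : C * a * |v - t₂| ^ r ≤ a/n := by
            apply hrw _ (abs_nonneg _)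
            rw [abs_of_nonneg (by linarith)]
            linarith
          have := abs_le.1 hb
          linarith [this.2]
        have := le_abs_self (z s v - m s v)
        rw [h2an]
        linarith
      · -- lower bound
        set j' := ⌊t₂/δ⌋₊ with hj'def
        by_cases hj'0 : j' = 0
        · -- t₂ < δ : near-diagonal, trivial
          apply htrivlow
          have ht₂δ : t₂ < δ := by
            have := Nat.floor_eq_zero.1 hj'0
            exact (div_lt_one hδ).1 this
          have hb := hHh t₁ t₂ t₂ htmem ⟨h1.trans h12, le_rfl, h2T⟩
          rw [hm3 t₂ (h1.trans h12) h2T, sub_zero] at hb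
          have e1 : C * a * |t₁ - t₂| ^ r ≤ a/n := by
            apply hrw _ (abs_nonneg _)
            rw [abs_sub_comm, abs_of_nonneg (by linarith)]
            linarith
          have := (abs_le.1 hb).2
          linarith [le_abs_self (m t₁ t₂)]
        · have hj'1 : 1 ≤ j' := Nat.one_le_iff_ne_zero.2 hj'0
          have hj'K : j' ≤ K := by
            have h' : (j':ℝ) ≤ t₂/δ := Nat.floor_le (by positivity)
            have h'' : t₂/δ ≤ K := by rw [div_le_iff₀ hδ, hKδ]; exact h2T
            exact_mod_cast h'.trans h''
          have hj'1' : (1:ℝ) ≤ (j':ℝ) := by exact_mod_cast hj'1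
          have hj'K' : (j':ℝ) ≤ K := by exact_mod_cast hj'K
          set u := (j':ℝ) * δ with hudef
          have hu0 : 0 < u := by rw [hudef]; nlinarith
          have huT : u ≤ T := by rw [hudef]; nlinarith
          have hut₂ : u ≤ t₂ := by
            have h' : (j':ℝ) ≤ t₂/δ := Nat.floor_le (by positivity)
            rw [hudef]
            calc (j':ℝ) * δ ≤ (t₂/δ) * δ := by nlinarith
              _ = t₂ := by field_simp
          have hud : t₂ - u ≤ δ := by
            have h' : t₂/δ < (j':ℝ) + 1 := Nat.lt_floor_add_one _
            have : t₂ < ((j':ℝ)+1)*δ := by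
              calc t₂ = (t₂/δ) * δ := by field_simp
                _ < ((j':ℝ)+1)*δ := by nlinarith
            rw [hudef]; nlinarith
          have hvertu : m t₁ t₂ - m t₁ u ≤ a/n → False ∨ True := by exact fun _ => Or.inr trivial
          by_cases hts : u < t₁
          · -- near diagonal
            apply htrivlow
            have hb := hHh t₁ t₂ t₂ htmem ⟨h1.trans h12, le_rfl, h2T⟩
            rw [hm3 t₂ (h1.trans h12) h2T, sub_zero] at hb
            have e1 : C * a * |t₁ - t₂| ^ r ≤ a/n := by
              apply hrw _ (abs_nonneg _)
              rw [abs_sub_comm, abs_of_nonneg (by linarith)]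
              linarith
            have := (abs_le.1 hb).2
            linarith [le_abs_self (m t₁ t₂)]
          · push_neg at hts
            have hy0 : 0 ≤ m t₁ u := hm0 t₁ u h1 hts huT
            have hya : m t₁ u ≤ a := hmub t₁ u h1 hts huT
            obtain ⟨k, hkn, hky, hkalt⟩ := exists_level a (m t₁ u) n hn hy0 hya
            have hyk1 : m t₁ u ≤ ((k:ℝ)+1) * (a/n) := by
              rcases eq_or_lt_of_le hkn with hk1n | hkn'
              · have : ((k:ℝ)+1) = (n:ℝ) := by exact_mod_cast hk1n
                rw [this]
                calc m t₁ u ≤ a := hya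
                  _ = (n:ℝ) * (a/n) := by field_simp
              · exact (hkalt.resolve_left (by omega)).le
            have hvert : m t₁ t₂ - m t₁ u ≤ a/n := by
              have hb := hHv t₁ t₂ u htmem ⟨h1, hts, huT⟩
              have e1 : C * a * |t₂ - u| ^ r ≤ a/n := by
                apply hrw _ (abs_nonneg _)
                rw [abs_of_nonneg (by linarith)]
                linarith
              have := (abs_le.1 hb).2
              linarith
            by_cases hk0 : k = 0
            · -- m t₁ u small : trivial
              apply htrivlow
              subst hk0
              simp only [Nat.cast_zero, zero_add, one_mul] at hyk1
              linarith
            · -- use level-crossing point (cpt j' k, u)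
              have hk1 : 1 ≤ k := Nat.one_le_iff_ne_zero.2 hk0
              have hc2 := hcpt3 j' k hj'1 hj'K hk1 t₁ ⟨h1, hts⟩ hky
              obtain ⟨hts', hlams'⟩ := hc2
              have hsmem := hcpt1 j' k hj'1 hj'K hk1
              set s' := cpt j' k with hs'def
              have hsF : (s', u) ∈ F := by
                have := hmemF j' k hj'1 hj'K (by omega)
                rwa [hptk j' k hk0] at this
              refine ⟨(s', u), hsF, ?_⟩
              simp only
              have hzl : z s' u ≤ z t₁ t₂ :=
                le_trans (hz2 s' u t₂ hsmem.1 hsmem.2 hut₂ h2T)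
                  (hz1 t₁ s' t₂ h1 hts' (hsmem.2.trans hut₂) h2T)
              have hhor : m t₁ u - m s' u ≤ a/n := by
                have := lamsucc k
                linarith
              have := neg_abs_le (z s' u - m s' u)
              rw [h2an]
              linarith

theorem monotone_process_uniform_moment_bound
    {Ω : Type*} [MeasurableSpace Ω] (μ : Measure Ω) [IsProbabilityMeasure μ]
    (T : ℝ) (hT : 0 < T) (Y : Ω → ℝ → ℝ → ℝ) (C r : ℝ) (hC : 0 < C) (hr : 0 < r)
    (hY : ∀ ω, MemD T (Y ω))
    (hintpt : ∀ t₁ t₂, Integrable (fun ω => Y ω t₁ t₂) μ)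
    (hpos : 0 < ∫ ω, Y ω 0 T ∂μ)
    (hHolder : ∀ p q : ℝ × ℝ, p ∈ Tri T → q ∈ Tri T →
      |(∫ ω, Y ω p.1 p.2 ∂μ) - ∫ ω, Y ω q.1 q.2 ∂μ| ≤
        C * (∫ ω, Y ω 0 T ∂μ) * (|p.1 - q.1| ^ r + |p.2 - q.2| ^ r))
    (n : ℕ) (hn : 0 < n) (q : ℝ) (hq : 1 ≤ q)
    (hintq : ∀ t₁ t₂, Integrable (fun ω => |Y ω t₁ t₂ - ∫ ω', Y ω' t₁ t₂ ∂μ| ^ q) μ)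
    (hintsup : Integrable (fun ω =>
      (⨆ p : Tri T, |Y ω (p : ℝ × ℝ).1 (p : ℝ × ℝ).2 -
        ∫ ω', Y ω' (p : ℝ × ℝ).1 (p : ℝ × ℝ).2 ∂μ|) ^ q) μ) :
    ∫ ω, (⨆ p : Tri T, |Y ω (p : ℝ × ℝ).1 (p : ℝ × ℝ).2 -
        ∫ ω', Y ω' (p : ℝ × ℝ).1 (p : ℝ × ℝ).2 ∂μ|) ^ q ∂μ ≤
      2 ^ (q - 1) * ((2 * n - 1) * T * (C * n) ^ (1 / r) + 1) *
        (⨆ p : Tri T, ∫ ω, |Y ω (p : ℝ × ℝ).1 (p : ℝ × ℝ).2 -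
          ∫ ω', Y ω' (p : ℝ × ℝ).1 (p : ℝ × ℝ).2 ∂μ| ^ q ∂μ) +
      2 ^ (q - 1) * (2 / n) ^ q * (∫ ω, Y ω 0 T ∂μ) ^ q := by
  obtain ⟨m, hm_eq⟩ : ∃ m : ℝ → ℝ → ℝ, ∀ t₁ t₂, m t₁ t₂ = ∫ ω, Y ω t₁ t₂ ∂μ :=
    ⟨_, fun _ _ => rfl⟩
  simp only [← hm_eq] at hHolder hintq hintsup hpos ⊢
  have hn' : (0:ℝ) < n := by exact_mod_cast hn
  have hq0 : (0:ℝ) < q := by linarith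
  set a := m 0 T with hadef
  have ha : 0 < a := hpos
  -- m ∈ 𝒟
  have hmD : MemD T m := by
    refine ⟨?_, ?_, ?_⟩
    · intro s₁ t₁ t₂ h0 h1 h2 h3
      rw [hm_eq, hm_eq]
      exact integral_mono (hintpt t₁ t₂) (hintpt s₁ t₂) (fun ω => (hY ω).1 s₁ t₁ t₂ h0 h1 h2 h3)
    · intro t₁ s₂ t₂ h0 h1 h2 h3
      rw [hm_eq, hm_eq]
      exact integral_mono (hintpt t₁ s₂) (hintpt t₁ t₂) (fun ω => (hY ω).2.1 t₁ s₂ t₂ h0 h1 h2 h3)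
    · intro t h0 h3
      rw [hm_eq]
      have : (fun ω => Y ω t t) = (fun _ : Ω => (0:ℝ)) := funext fun ω => (hY ω).2.2 t h0 h3
      rw [this, integral_zero]
  obtain ⟨F, hFne, hFTri, hFcard, hFchain⟩ :=
    chaining T C r a hT hC hr ha m hmD rfl hHolder n hn
  have hTri_ne : Nonempty (Tri T) := ⟨⟨(0,0), ⟨le_rfl, le_rfl, hT.le⟩⟩⟩
  -- pointwise boundedness of the family
  have hbdd : ∀ ω, BddAbove (Set.range fun p : Tri T =>
      |Y ω (p : ℝ × ℝ).1 (p : ℝ × ℝ).2 - m (p : ℝ × ℝ).1 (p : ℝ × ℝ).2|) := by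
    intro ω
    refine ⟨Y ω 0 T + a, ?_⟩
    rintro y ⟨p, rfl⟩
    obtain ⟨h1, h12, h2T⟩ := p.2
    have hY0 : 0 ≤ Y ω (p : ℝ × ℝ).1 (p : ℝ × ℝ).2 := memD_nonneg (hY ω) h1 h12 h2T
    have hY1 : Y ω (p : ℝ × ℝ).1 (p : ℝ × ℝ).2 ≤ Y ω 0 T := memD_le_top (hY ω) h1 h12 h2T
    have hM0 : 0 ≤ m (p : ℝ × ℝ).1 (p : ℝ × ℝ).2 := memD_nonneg hmD h1 h12 h2T
    have hM1 : m (p : ℝ × ℝ).1 (p : ℝ × ℝ).2 ≤ a := memD_le_top hmD h1 h12 h2T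
    exact abs_le.2 ⟨by linarith, by linarith⟩
  set S : Ω → ℝ := fun ω => ⨆ p : Tri T,
    |Y ω (p : ℝ × ℝ).1 (p : ℝ × ℝ).2 - m (p : ℝ × ℝ).1 (p : ℝ × ℝ).2| with hSdef
  have hSnn : ∀ ω, 0 ≤ S ω := fun ω => Real.iSup_nonneg fun p => abs_nonneg _
  set M : Ω → ℝ := fun ω => F.sup' hFne (fun p => |Y ω p.1 p.2 - m p.1 p.2|) with hMdef
  have hMnn : ∀ ω, 0 ≤ M ω := by
    intro ω
    obtain ⟨p₀, hp₀⟩ := hFne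
    exact (abs_nonneg _).trans (Finset.le_sup' (fun p => |Y ω p.1 p.2 - m p.1 p.2|) hp₀)
  have hSM : ∀ ω, S ω ≤ M ω + 2 * a / n := by
    intro ω
    apply ciSup_le
    intro p
    obtain ⟨⟨pu, hpu, hu⟩, ⟨pl, hpl, hl⟩⟩ :=
      hFchain (Y ω) (hY ω) (p : ℝ × ℝ).1 (p : ℝ × ℝ).2 p.2
    refine abs_le.2 ⟨?_, ?_⟩
    · have := Finset.le_sup' (fun p => |Y ω p.1 p.2 - m p.1 p.2|) hpl
      simp only [hMdef]
      linarith
    · have := Finset.le_sup' (fun p => |Y ω p.1 p.2 - m p.1 p.2|) hpu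
      simp only [hMdef]
      linarith
  have h2q : (0:ℝ) ≤ 2 ^ (q-1) := Real.rpow_nonneg (by norm_num) _
  -- pointwise q-th power bound
  have hptw : ∀ ω, S ω ^ q ≤
      2 ^ (q-1) * ((∑ p ∈ F, |Y ω p.1 p.2 - m p.1 p.2| ^ q) + (2 * a / n) ^ q) := by
    intro ω
    have h4 : M ω ^ q ≤ ∑ p ∈ F, |Y ω p.1 p.2 - m p.1 p.2| ^ q := by
      obtain ⟨ps, hps, hMeq⟩ := Finset.exists_mem_eq_sup' hFne (fun p => |Y ω p.1 p.2 - m p.1 p.2|)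
      rw [hMdef]
      simp only
      rw [hMeq]
      exact Finset.single_le_sum (f := fun p : ℝ × ℝ => |Y ω p.1 p.2 - m p.1 p.2| ^ q)
        (fun p _ => Real.rpow_nonneg (abs_nonneg _) q) hps
    calc S ω ^ q ≤ (M ω + 2*a/n) ^ q :=
          Real.rpow_le_rpow (hSnn ω) (hSM ω) hq0.le
      _ ≤ 2 ^ (q-1) * (M ω ^ q + (2*a/n) ^ q) :=
          two_rpow_aux _ _ q (hMnn ω) (by positivity) hq
      _ ≤ _ := by
          apply mul_le_mul_of_nonneg_left _ h2q
          have : (0:ℝ) ≤ (2*a/n)^q := Real.rpow_nonneg (by positivity) _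
          linarith
  -- integrability of the majorant
  have hintG : Integrable (fun ω =>
      2 ^ (q-1) * ((∑ p ∈ F, |Y ω p.1 p.2 - m p.1 p.2| ^ q) + (2 * a / n) ^ q)) μ := by
    apply Integrable.const_mul
    apply Integrable.add _ (integrable_const _)
    apply integrable_finset_sum
    intro p hp
    exact hintq p.1 p.2
  have hI1 : ∫ ω, S ω ^ q ∂μ ≤
      ∫ ω, 2 ^ (q-1) * ((∑ p ∈ F, |Y ω p.1 p.2 - m p.1 p.2| ^ q) + (2 * a / n) ^ q) ∂μ :=
    integral_mono hintsup hintG hptw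
  have hI2 : ∫ ω, 2 ^ (q-1) * ((∑ p ∈ F, |Y ω p.1 p.2 - m p.1 p.2| ^ q) + (2 * a / n) ^ q) ∂μ =
      2 ^ (q-1) * ((∑ p ∈ F, ∫ ω, |Y ω p.1 p.2 - m p.1 p.2| ^ q ∂μ) + (2 * a / n) ^ q) := by
    rw [integral_const_mul, integral_add (integrable_finset_sum _ (fun p hp => hintq p.1 p.2))
      (integrable_const _), integral_finset_sum _ (fun p hp => hintq p.1 p.2), integral_const]
    simp [measure_univ]
  set B : ℝ := ⨆ p : Tri T, ∫ ω, |Y ω (p : ℝ × ℝ).1 (p : ℝ × ℝ).2 -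
      m (p : ℝ × ℝ).1 (p : ℝ × ℝ).2| ^ q ∂μ with hBdef
  have hBnn : 0 ≤ B :=
    Real.iSup_nonneg fun p => integral_nonneg fun ω => Real.rpow_nonneg (abs_nonneg _) _
  have hBbdd : BddAbove (Set.range fun p : Tri T => ∫ ω, |Y ω (p : ℝ × ℝ).1 (p : ℝ × ℝ).2 -
      m (p : ℝ × ℝ).1 (p : ℝ × ℝ).2| ^ q ∂μ) := by
    refine ⟨∫ ω, S ω ^ q ∂μ, ?_⟩
    rintro y ⟨p, rfl⟩
    apply integral_mono (hintq _ _) hintsup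
    intro ω
    apply Real.rpow_le_rpow (abs_nonneg _) _ hq0.le
    exact le_ciSup (hbdd ω) p
  have hsum : ∑ p ∈ F, ∫ ω, |Y ω p.1 p.2 - m p.1 p.2| ^ q ∂μ ≤ (F.card : ℝ) * B := by
    have := Finset.sum_le_card_nsmul F (fun p => ∫ ω, |Y ω p.1 p.2 - m p.1 p.2| ^ q ∂μ) B
      (fun p hp => le_ciSup hBbdd (⟨p, hFTri p hp⟩ : Tri T))
    rwa [nsmul_eq_mul] at this
  have hEpow : (2 * a / (n:ℝ)) ^ q = (2 / (n:ℝ)) ^ q * a ^ q := by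
    rw [show 2 * a / (n:ℝ) = (2 / n) * a by ring, Real.mul_rpow (by positivity) ha.le]
  calc ∫ ω, S ω ^ q ∂μ
      ≤ 2 ^ (q-1) * ((∑ p ∈ F, ∫ ω, |Y ω p.1 p.2 - m p.1 p.2| ^ q ∂μ) + (2 * a / n) ^ q) := by
        rw [← hI2]; exact hI1
    _ ≤ 2 ^ (q-1) * (((2 * n - 1) * T * (C * n) ^ (1 / r) + 1) * B + (2 * a / n) ^ q) := by
        apply mul_le_mul_of_nonneg_left _ h2q
        have h1 : (F.card : ℝ) * B ≤ ((2 * n - 1) * T * (C * n) ^ (1 / r) + 1) * B :=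
          mul_le_mul_of_nonneg_right (by
            have := hFcard
            rw [one_div] at this ⊢
            linarith) hBnn
        linarith
    _ = 2 ^ (q - 1) * ((2 * n - 1) * T * (C * n) ^ (1 / r) + 1) * B +
        2 ^ (q - 1) * (2 / n) ^ q * a ^ q := by
        rw [hEpow]; ring
end

section
/- Under the hypotheses of the previous one-parameter corollary (independent non-decreasing processes Zᴺᵢ on [0,T] with E[|Zᴺᵢ(T)−Zᴺᵢ(0)|^q]^{1/q} ≤ Mᴺ and Hölder-r expectations), if {Mᴺ, w̄ᴺ} is bounded and (q² − 2q − 2)r > 2, then almost surely lim_{N→∞} sup_{0≤t₁≤t₂≤T} |(1/N)Σᵢ₌₁ᴺ (Zᴺᵢ(t₂) − Zᴺᵢ(t₁) − E[Zᴺᵢ(t₂) − Zᴺᵢ(t₁)])| = 0. -/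
/-!
Fix a time `t`. The increments `Z N i t - Z N i 0` are non-negative, independent in `i` and have
`q`-th moments bounded uniformly in `N`, with `q > 2`. Truncating the `N`-th row at `N ^ α`, a
fourth-moment bound for the truncated centred sum, Markov's inequality for the tails and
Borel–Cantelli show that the centred row averages tend to `0` almost surely, with no relation
between different rows; this holds simultaneously on the countable grid `k T / K`.

Uniformity comes from monotonicity: between neighbouring grid points the average of the
non-decreasing paths is squeezed between its grid values, while the averaged means are uniformly
`r`-Hölder, so they move by `O(K ^ (-r))` across a cell. The supremum over `t₁ ≤ t₂` is at most
twice the supremum over a single time.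
-/

open MeasureTheory ProbabilityTheory Filter

/-- Membership in `D↑`: non-decreasing and right-continuous on `[0,T]`. -/
def MemDUp (T : ℝ) (z : ℝ → ℝ) : Prop :=
  MonotoneOn z (Set.Icc 0 T) ∧
  ∀ t ∈ Set.Ico (0 : ℝ) T, ContinuousWithinAt z (Set.Icc t T) t

open Set Topology Finset

lemma Real.rpow_le_one_add_rpow {x p q : ℝ} (hx : 0 ≤ x) (hp : 0 ≤ p) (hpq : p ≤ q) :
    x ^ p ≤ 1 + x ^ q := by
  rcases le_or_gt x 1 with h | h
  · linarith [Real.rpow_le_one hx h hp, Real.rpow_nonneg hx q]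
  · linarith [Real.rpow_le_rpow_of_exponent_le h.le hpq]

lemma Real.sub_min_le_rpow_mul_rpow {x c q : ℝ} (hx : 0 ≤ x) (hc : 0 < c) (hq : 1 ≤ q) :
    x - min x c ≤ x ^ q * c ^ (1 - q) := by
  rcases le_or_gt x c with h | h
  · rw [min_eq_left h, sub_self]
    positivity
  · calc x - min x c ≤ x := by linarith [le_min hx hc.le]
      _ = x ^ q * x ^ (1 - q) := by
        rw [← Real.rpow_add (hc.trans h), add_sub_cancel, Real.rpow_one]
      _ ≤ x ^ q * c ^ (1 - q) := mul_le_mul_of_nonneg_left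
        (Real.rpow_le_rpow_of_nonpos hc h.le (by linarith)) (by positivity)

namespace MeasureTheory

variable {Ω : Type*} [MeasurableSpace Ω] {μ : Measure Ω}

lemma ae_eventually_notMem_of_le_summable {s : ℕ → Set Ω} {u : ℕ → ℝ} (hu : Summable u)
    (hs : ∀ᶠ N in atTop, μ (s N) ≤ ENNReal.ofReal (u N)) :
    ∀ᵐ ω ∂μ, ∀ᶠ N in atTop, ω ∉ s N := by
  obtain ⟨N₀, hN₀⟩ := eventually_atTop.1 hs
  set t : ℕ → Set Ω := fun N => {ω | N₀ ≤ N ∧ ω ∈ s N}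
  have ht : ∀ N, μ (t N) ≤ (u N).toNNReal := fun N => by
    by_cases hN : N₀ ≤ N
    · exact (measure_mono fun ω hω => hω.2).trans (hN₀ N hN)
    · simp [t, hN]
  have hsum : ∑' N, μ (t N) ≠ ⊤ :=
    ne_top_of_le_ne_top (ENNReal.tsum_coe_ne_top_iff_summable.2 hu.toNNReal)
      (ENNReal.tsum_le_tsum ht)
  filter_upwards [ae_eventually_notMem hsum] with ω hω
  filter_upwards [hω, eventually_ge_atTop N₀] with N hNt hN hNs
  exact hNt ⟨hN, hNs⟩

variable [IsFiniteMeasure μ]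

lemma measure_le_le_ofReal_integral_div {f : Ω → ℝ} {a : ℝ} (hf : Integrable f μ)
    (hf0 : ∀ ω, 0 ≤ f ω) (ha : 0 < a) :
    μ {ω | a ≤ f ω} ≤ ENNReal.ofReal ((∫ ω, f ω ∂μ) / a) := by
  rw [← ofReal_measureReal]
  refine ENNReal.ofReal_le_ofReal ?_
  rw [le_div_iff₀ ha, mul_comm]
  exact mul_meas_ge_le_integral_of_nonneg (ae_of_all μ hf0) hf a

lemma integrable_pow_of_abs_le {f : Ω → ℝ} {b : ℝ} (hf : Measurable f) (hb : ∀ ω, |f ω| ≤ b)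
    (k : ℕ) : Integrable (fun ω => f ω ^ k) μ :=
  .of_bound (hf.pow_const k).aestronglyMeasurable (b ^ k) <| ae_of_all _ fun ω => by
    rw [Real.norm_eq_abs, abs_pow]
    exact pow_le_pow_left₀ (abs_nonneg _) (hb ω) k

lemma integrable_pow_sum_of_abs_le {ι : Type*} {Y : ι → Ω → ℝ} {b : ℝ}
    (hY : ∀ i, Measurable (Y i)) (hYb : ∀ i ω, |Y i ω| ≤ b) (s : Finset ι) (k : ℕ) :
    Integrable (fun ω => (∑ i ∈ s, Y i ω) ^ k) μ := by
  refine integrable_pow_of_abs_le (s.measurable_fun_sum fun i _ => hY i) (b := #s * b)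
    (fun ω => ?_) k
  calc |∑ i ∈ s, Y i ω| ≤ ∑ i ∈ s, |Y i ω| := abs_sum_le_sum_abs _ _
    _ ≤ #s * b := by simpa using sum_le_sum fun i (_ : i ∈ s) => hYb i ω

section Truncation

variable {W : Ω → ℝ} {q c : ℝ}

lemma integrable_pow_of_integrable_rpow (hW : Measurable W) (hW0 : ∀ ω, 0 ≤ W ω) {p : ℕ}
    (hpq : p ≤ q) (hWq : Integrable (fun ω => W ω ^ q) μ) :
    Integrable (fun ω => W ω ^ p) μ :=
  ((integrable_const 1).add hWq).mono' (hW.pow_const p).aestronglyMeasurable <|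
    ae_of_all _ fun ω => by
      rw [Real.norm_eq_abs, abs_of_nonneg (pow_nonneg (hW0 ω) p), ← Real.rpow_natCast]
      exact Real.rpow_le_one_add_rpow (hW0 ω) p.cast_nonneg hpq

lemma integrable_min_const (hW : Measurable W) (hW0 : ∀ ω, 0 ≤ W ω) (hc : 0 ≤ c) :
    Integrable (fun ω => min (W ω) c) μ :=
  .of_bound (hW.min measurable_const).aestronglyMeasurable c <| ae_of_all _ fun ω => by
    rw [Real.norm_eq_abs, abs_of_nonneg (le_min (hW0 ω) hc)]
    exact min_le_right _ _

lemma abs_integral_sub_integral_min_le (hW : Measurable W) (hW0 : ∀ ω, 0 ≤ W ω) (hc : 0 < c)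
    (hq : 1 ≤ q) (hWq : Integrable (fun ω => W ω ^ q) μ) :
    |∫ ω, W ω ∂μ - ∫ ω, min (W ω) c ∂μ| ≤ (∫ ω, W ω ^ q ∂μ) * c ^ (1 - q) := by
  have hW1 : Integrable W μ := by
    simpa using integrable_pow_of_integrable_rpow hW hW0 (p := 1) (by simpa using hq) hWq
  have hmin := integrable_min_const (μ := μ) hW hW0 hc.le
  rw [← integral_sub hW1 hmin,
    abs_of_nonneg (integral_nonneg fun ω => sub_nonneg.2 (min_le_left _ _)), ← integral_mul_const]
  exact integral_mono (hW1.sub hmin) (hWq.mul_const _)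
    fun ω => Real.sub_min_le_rpow_mul_rpow (hW0 ω) hc hq

lemma measure_lt_le_ofReal_integral_rpow_div (hW0 : ∀ ω, 0 ≤ W ω) (hc : 0 < c) (hq : 0 < q)
    (hWq : Integrable (fun ω => W ω ^ q) μ) :
    μ {ω | c < W ω} ≤ ENNReal.ofReal ((∫ ω, W ω ^ q ∂μ) / c ^ q) :=
  (measure_mono fun ω (hω : c < W ω) => Real.rpow_le_rpow hc.le hω.le hq.le).trans <|
    measure_le_le_ofReal_integral_div hWq (fun ω => Real.rpow_nonneg (hW0 ω) q) (by positivity)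

end Truncation

end MeasureTheory

namespace ProbabilityTheory

variable {Ω : Type*} [MeasurableSpace Ω] {μ : Measure Ω}

lemma IndepFun.integral_add_pow {S W : Ω → ℝ} (h : IndepFun S W μ)
    (hS : ∀ k : ℕ, Integrable (fun ω => S ω ^ k) μ)
    (hW : ∀ k : ℕ, Integrable (fun ω => W ω ^ k) μ) (n : ℕ) :
    ∫ ω, (S ω + W ω) ^ n ∂μ =
      ∑ k ∈ range (n + 1), (∫ ω, S ω ^ k ∂μ) * (∫ ω, W ω ^ (n - k) ∂μ) * n.choose k := by
  have hpow : ∀ k m : ℕ, IndepFun (fun ω => S ω ^ k) (fun ω => W ω ^ m) μ := fun k m =>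
    h.comp (measurable_id.pow_const k) (measurable_id.pow_const m)
  have hint : ∀ k, Integrable (fun ω => S ω ^ k * W ω ^ (n - k) * (n.choose k : ℝ)) μ :=
    fun k => ((hpow k _).integrable_mul (hS k) (hW _)).mul_const _
  simp_rw [add_pow]
  rw [integral_finsetSum _ fun k _ => hint k]
  refine sum_congr rfl fun k _ => ?_
  rw [integral_mul_const]
  congr 1
  exact (hpow k _).integral_mul_eq_mul_integral (hS k).aestronglyMeasurable
    (hW _).aestronglyMeasurable

lemma iIndepFun.indepFun_sum_of_notMem {ι : Type*} {Y : ι → Ω → ℝ} (hind : iIndepFun Y μ)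
    (hY : ∀ i, Measurable (Y i)) {s : Finset ι} {a : ι} (ha : a ∉ s) :
    IndepFun (fun ω => ∑ i ∈ s, Y i ω) (Y a) μ := by
  classical
  simpa [sum_fn] using hind.indepFun_finsetSum_of_notMem hY ha

variable [IsProbabilityMeasure μ]

lemma IndepFun.integral_add_sq {S W : Ω → ℝ} (h : IndepFun S W μ)
    (hS : ∀ k : ℕ, Integrable (fun ω => S ω ^ k) μ)
    (hW : ∀ k : ℕ, Integrable (fun ω => W ω ^ k) μ) (hW0 : ∫ ω, W ω ∂μ = 0) :
    ∫ ω, (S ω + W ω) ^ 2 ∂μ = ∫ ω, S ω ^ 2 ∂μ + ∫ ω, W ω ^ 2 ∂μ := by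
  rw [h.integral_add_pow hS hW]
  simp [sum_range_succ, hW0]
  ring

lemma IndepFun.integral_add_pow_four {S W : Ω → ℝ} (h : IndepFun S W μ)
    (hS : ∀ k : ℕ, Integrable (fun ω => S ω ^ k) μ)
    (hW : ∀ k : ℕ, Integrable (fun ω => W ω ^ k) μ)
    (hS0 : ∫ ω, S ω ∂μ = 0) (hW0 : ∫ ω, W ω ∂μ = 0) :
    ∫ ω, (S ω + W ω) ^ 4 ∂μ =
      ∫ ω, S ω ^ 4 ∂μ + 6 * (∫ ω, S ω ^ 2 ∂μ) * (∫ ω, W ω ^ 2 ∂μ) + ∫ ω, W ω ^ 4 ∂μ := by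
  rw [h.integral_add_pow hS hW]
  simp [sum_range_succ, hS0, hW0, Nat.choose]
  ring

section SumMoments

variable {ι : Type*} {Y : ι → Ω → ℝ} {b v : ℝ}

lemma integral_sum_sq_le (hY : ∀ i, Measurable (Y i)) (hYb : ∀ i ω, |Y i ω| ≤ b)
    (hY0 : ∀ i, ∫ ω, Y i ω ∂μ = 0) (hY2 : ∀ i, ∫ ω, Y i ω ^ 2 ∂μ ≤ v) (hind : iIndepFun Y μ)
    (s : Finset ι) :
    ∫ ω, (∑ i ∈ s, Y i ω) ^ 2 ∂μ ≤ #s * v := by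
  classical
  induction s using Finset.induction_on with
  | empty => simp
  | @insert a s ha ih =>
    simp_rw [sum_insert ha, add_comm (Y a _)]
    rw [(hind.indepFun_sum_of_notMem hY ha).integral_add_sq
      (integrable_pow_sum_of_abs_le hY hYb s) (integrable_pow_of_abs_le (hY a) (hYb a)) (hY0 a),
      card_insert_of_notMem ha]
    push_cast
    linarith [hY2 a]

lemma integral_sum_pow_four_le (hY : ∀ i, Measurable (Y i)) (hYb : ∀ i ω, |Y i ω| ≤ b)
    (hY0 : ∀ i, ∫ ω, Y i ω ∂μ = 0) (hY2 : ∀ i, ∫ ω, Y i ω ^ 2 ∂μ ≤ v) (hind : iIndepFun Y μ)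
    (s : Finset ι) :
    ∫ ω, (∑ i ∈ s, Y i ω) ^ 4 ∂μ ≤ 3 * (#s * v) ^ 2 + #s * b ^ 2 * v := by
  classical
  induction s using Finset.induction_on with
  | empty => simp
  | @insert a s ha ih =>
    have hS0 : ∫ ω, ∑ i ∈ s, Y i ω ∂μ = 0 := by
      rw [integral_finsetSum _ fun i _ => by simpa using integrable_pow_of_abs_le (hY i) (hYb i) 1]
      simp [hY0]
    have hS2 := integral_sum_sq_le hY hYb hY0 hY2 hind s
    have hW2 : 0 ≤ ∫ ω, Y a ω ^ 2 ∂μ := integral_nonneg fun ω => sq_nonneg _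
    have hW4 : ∫ ω, Y a ω ^ 4 ∂μ ≤ b ^ 2 * v := by
      calc ∫ ω, Y a ω ^ 4 ∂μ ≤ ∫ ω, b ^ 2 * Y a ω ^ 2 ∂μ := by
            refine integral_mono (integrable_pow_of_abs_le (hY a) (hYb a) 4)
              ((integrable_pow_of_abs_le (hY a) (hYb a) 2).const_mul _) fun ω => ?_
            have : Y a ω ^ 2 ≤ b ^ 2 := sq_le_sq' (abs_le.1 (hYb a ω)).1 (abs_le.1 (hYb a ω)).2
            nlinarith [sq_nonneg (Y a ω)]
        _ ≤ b ^ 2 * v := by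
            rw [integral_const_mul]
            exact mul_le_mul_of_nonneg_left (hY2 a) (sq_nonneg b)
    have hprod := mul_le_mul hS2 (hY2 a) hW2 (hS2.trans' (integral_nonneg fun ω => sq_nonneg _))
    simp_rw [sum_insert ha, add_comm (Y a _)]
    rw [(hind.indepFun_sum_of_notMem hY ha).integral_add_pow_four
      (integrable_pow_sum_of_abs_le hY hYb s) (integrable_pow_of_abs_le (hY a) (hYb a)) hS0
      (hY0 a), card_insert_of_notMem ha]
    push_cast
    nlinarith [sq_nonneg v]

end SumMoments

lemma integral_sq_sub_integral_min_le {W : Ω → ℝ} {q c : ℝ} (hW : Measurable W)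
    (hW0 : ∀ ω, 0 ≤ W ω) (hc : 0 ≤ c) (hq : 2 ≤ q) (hWq : Integrable (fun ω => W ω ^ q) μ) :
    ∫ ω, (min (W ω) c - ∫ ω', min (W ω') c ∂μ) ^ 2 ∂μ ≤ 1 + ∫ ω, W ω ^ q ∂μ := by
  have hmin := hW.min (measurable_const (a := c))
  have hsq : ∀ ω, min (W ω) c ^ 2 ≤ W ω ^ 2 := fun ω =>
    pow_le_pow_left₀ (le_min (hW0 ω) hc) (min_le_left _ _) 2
  calc ∫ ω, (min (W ω) c - ∫ ω', min (W ω') c ∂μ) ^ 2 ∂μ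
      = variance (fun ω => min (W ω) c) μ := (variance_eq_integral hmin.aemeasurable).symm
    _ ≤ ∫ ω, min (W ω) c ^ 2 ∂μ := variance_le_expectation_sq hmin.aestronglyMeasurable
    _ ≤ ∫ ω, (1 + W ω ^ q) ∂μ := by
      refine integral_mono ?_ ((integrable_const 1).add hWq) fun ω => (hsq ω).trans ?_
      · refine (integrable_pow_of_integrable_rpow hW hW0 (p := 2) (by simpa using hq) hWq).mono'
          (hmin.pow_const 2).aestronglyMeasurable (ae_of_all _ fun ω => ?_)
        rw [Real.norm_eq_abs, abs_of_nonneg (sq_nonneg _)]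
        exact hsq ω
      · rw [← Real.rpow_natCast]
        exact Real.rpow_le_one_add_rpow (hW0 ω) (by norm_num) (by simpa using hq)
    _ = 1 + ∫ ω, W ω ^ q ∂μ := by
      rw [integral_add (integrable_const 1) hWq]
      simp

section TailBound

variable {ι : Type*} [Fintype ι] {W : ι → Ω → ℝ} {q C c : ℝ}

lemma abs_sum_integral_min_sub_integral_le (hW : ∀ i, Measurable (W i))
    (hW0 : ∀ i ω, 0 ≤ W i ω) (hq : 1 ≤ q) (hWq : ∀ i, Integrable (fun ω => W i ω ^ q) μ)
    (hC : ∀ i, ∫ ω, W i ω ^ q ∂μ ≤ C) (hc : 0 < c) :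
    |∑ i, (∫ ω, min (W i ω) c ∂μ - ∫ ω, W i ω ∂μ)| ≤ Fintype.card ι * (C * c ^ (1 - q)) := by
  refine (abs_sum_le_sum_abs _ _).trans ?_
  calc ∑ i, |∫ ω, min (W i ω) c ∂μ - ∫ ω, W i ω ∂μ| ≤ ∑ _i : ι, C * c ^ (1 - q) := by
        refine sum_le_sum fun i _ => ?_
        rw [abs_sub_comm]
        exact (abs_integral_sub_integral_min_le (hW i) (hW0 i) hc hq (hWq i)).trans
          (mul_le_mul_of_nonneg_right (hC i) (by positivity))
    _ = Fintype.card ι * (C * c ^ (1 - q)) := by simp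

lemma measure_iUnion_lt_le (hW0 : ∀ i ω, 0 ≤ W i ω) (hq : 0 < q)
    (hWq : ∀ i, Integrable (fun ω => W i ω ^ q) μ) (hC : ∀ i, ∫ ω, W i ω ^ q ∂μ ≤ C)
    (hc : 0 < c) :
    μ (⋃ i, {ω | c < W i ω}) ≤ ENNReal.ofReal (Fintype.card ι * (C / c ^ q)) := by
  calc μ (⋃ i, {ω | c < W i ω}) ≤ ∑ i, μ {ω | c < W i ω} := measure_iUnion_fintype_le _ _
    _ ≤ ∑ _i : ι, ENNReal.ofReal (C / c ^ q) := sum_le_sum fun i _ =>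
        (measure_lt_le_ofReal_integral_rpow_div (hW0 i) hc hq (hWq i)).trans
          (ENNReal.ofReal_le_ofReal (div_le_div_of_nonneg_right (hC i) (by positivity)))
    _ = ENNReal.ofReal (Fintype.card ι * (C / c ^ q)) := by
        rw [sum_const, card_univ, nsmul_eq_mul, ENNReal.ofReal_mul (by positivity),
          ENNReal.ofReal_natCast]

lemma measure_le_sum_truncation_pow_four_le (hW : ∀ i, Measurable (W i))
    (hW0 : ∀ i ω, 0 ≤ W i ω) (hind : iIndepFun W μ) (hq : 2 ≤ q)
    (hWq : ∀ i, Integrable (fun ω => W i ω ^ q) μ) (hC : ∀ i, ∫ ω, W i ω ^ q ∂μ ≤ C)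
    (hc : 0 ≤ c) {b : ℝ} (hb : 0 < b) :
    μ {ω | b ≤ (∑ i, (min (W i ω) c - ∫ ω', min (W i ω') c ∂μ)) ^ 4} ≤
      ENNReal.ofReal ((3 * (Fintype.card ι * (1 + C)) ^ 2 +
        Fintype.card ι * c ^ 2 * (1 + C)) / b) := by
  set Y : ι → Ω → ℝ := fun i ω => min (W i ω) c - ∫ ω', min (W i ω') c ∂μ
  have hY : ∀ i, Measurable (Y i) := fun i => ((hW i).min measurable_const).sub measurable_const
  have hmean : ∀ i, ∫ ω, min (W i ω) c ∂μ ≤ c := fun i => by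
    simpa using integral_mono (integrable_min_const (hW i) (hW0 i) hc) (integrable_const (μ := μ) c)
      fun ω => min_le_right (W i ω) c
  have hYb : ∀ i ω, |Y i ω| ≤ c := fun i ω =>
    abs_sub_le_of_nonneg_of_le (le_min (hW0 i ω) hc) (min_le_right _ _)
      (integral_nonneg fun ω' => le_min (hW0 i ω') hc) (hmean i)
  have hY0 : ∀ i, ∫ ω, Y i ω ∂μ = 0 := fun i => by
    rw [integral_sub (integrable_min_const (hW i) (hW0 i) hc) (integrable_const _)]
    simp
  have hY2 : ∀ i, ∫ ω, Y i ω ^ 2 ∂μ ≤ 1 + C := fun i =>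
    (integral_sq_sub_integral_min_le (hW i) (hW0 i) hc hq (hWq i)).trans (by linarith [hC i])
  have hYind : iIndepFun Y μ :=
    hind.comp (fun i x => min x c - ∫ ω', min (W i ω') c ∂μ)
      fun i => (measurable_id.min measurable_const).sub measurable_const
  have h4 := integral_sum_pow_four_le hY hYb hY0 hY2 hYind univ
  rw [card_univ] at h4
  exact (measure_le_le_ofReal_integral_div (integrable_pow_sum_of_abs_le hY hYb univ 4)
    (fun ω => by positivity) hb).trans
    (ENNReal.ofReal_le_ofReal (div_le_div_of_nonneg_right h4 hb.le))

lemma measure_lt_abs_sum_sub_integral_le (hW : ∀ i, Measurable (W i))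
    (hW0 : ∀ i ω, 0 ≤ W i ω) (hind : iIndepFun W μ) (hq : 2 ≤ q)
    (hWq : ∀ i, Integrable (fun ω => W i ω ^ q) μ) (hC : ∀ i, ∫ ω, W i ω ^ q ∂μ ≤ C)
    (hc : 0 < c) {a : ℝ} (ha : 0 < a) (hbias : Fintype.card ι * (C * c ^ (1 - q)) ≤ a / 2) :
    μ {ω | a < |∑ i, (W i ω - ∫ ω', W i ω' ∂μ)|} ≤
      ENNReal.ofReal (Fintype.card ι * (C / c ^ q)) +
      ENNReal.ofReal ((3 * (Fintype.card ι * (1 + C)) ^ 2 +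
        Fintype.card ι * c ^ 2 * (1 + C)) / (a / 2) ^ 4) := by
  set Y : ι → Ω → ℝ := fun i ω => min (W i ω) c - ∫ ω', min (W i ω') c ∂μ
  have hbias' := (abs_sum_integral_min_sub_integral_le hW hW0 (by linarith) hWq hC hc).trans hbias
  -- Off the tail events `c < W i`, the deviation is the truncated one plus the truncation bias.
  have hsubset : {ω | a < |∑ i, (W i ω - ∫ ω', W i ω' ∂μ)|} ⊆
      (⋃ i, {ω | c < W i ω}) ∪ {ω | (a / 2) ^ 4 ≤ (∑ i, Y i ω) ^ 4} := by
    intro ω hω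
    by_contra hcon
    simp only [Set.mem_union, Set.mem_iUnion, Set.mem_ofPred_eq, not_or, not_exists, not_lt,
      not_le] at hcon
    have hsplit : ∑ i, (W i ω - ∫ ω', W i ω' ∂μ) =
        ∑ i, Y i ω + ∑ i, (∫ ω, min (W i ω) c ∂μ - ∫ ω, W i ω ∂μ) := by
      rw [← sum_add_distrib]
      refine sum_congr rfl fun i _ => ?_
      simp only [Y, min_eq_left (hcon.1 i)]
      ring
    have hYsmall : |∑ i, Y i ω| < a / 2 := by
      by_contra! h
      have := pow_le_pow_left₀ (by positivity) h 4
      rw [pow_abs, abs_of_nonneg (by positivity)] at this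
      linarith [hcon.2]
    have := (abs_add_le _ _).trans_lt (add_lt_add_of_lt_of_le hYsmall hbias')
    rw [← hsplit] at this
    exact lt_asymm (show a < _ from hω) (by linarith)
  exact (measure_mono hsubset).trans ((measure_union_le _ _).trans (add_le_add
    (measure_iUnion_lt_le hW0 (by linarith) hWq hC hc)
    (measure_le_sum_truncation_pow_four_le hW hW0 hind hq hWq hC hc.le (by positivity))))

end TailBound

lemma summable_truncation_bound {q α : ℝ} (hαq : 2 < α * q) (hα1 : α < 1) (C ε : ℝ) :
    Summable fun N : ℕ => C * (N : ℝ) ^ (1 - α * q) +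
      16 / ε ^ 4 * (3 * (1 + C) ^ 2 / (N : ℝ) ^ 2 + (1 + C) * (N : ℝ) ^ (2 * α - 3)) := by
  have h := fun p (hp : p < -1) => Real.summable_nat_rpow.2 hp
  refine ((h _ (by linarith)).mul_left C).add ((Summable.add ?_
    ((h _ (by linarith)).mul_left _)).mul_left _)
  simpa [div_eq_mul_inv] using (Real.summable_nat_pow_inv.2 one_lt_two).mul_left _

theorem ae_eventually_abs_sum_sub_integral_le {W : (N : ℕ) → Fin N → Ω → ℝ} {q C ε : ℝ}
    (hq : 2 < q) (hε : 0 < ε) (hW : ∀ N i, Measurable (W N i)) (hW0 : ∀ N i ω, 0 ≤ W N i ω)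
    (hind : ∀ N, iIndepFun (W N) μ) (hWq : ∀ N i, Integrable (fun ω => W N i ω ^ q) μ)
    (hC : ∀ N i, ∫ ω, W N i ω ^ q ∂μ ≤ C) :
    ∀ᵐ ω ∂μ, ∀ᶠ N : ℕ in atTop, |∑ i, (W N i ω - ∫ ω', W N i ω' ∂μ)| ≤ N * ε := by
  -- Truncating the `N`-th row at `N ^ α` with `2 / q < α < 1` makes both the tail probabilities,
  -- of order `N ^ (1 - α q)`, and the fourth-moment bound, of order `N ^ (2 α - 3)`, summable.
  obtain ⟨α, hqα, hα1⟩ : ∃ α, 2 / q < α ∧ α < 1 :=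
    exists_between ((div_lt_one (by linarith)).2 hq)
  have hαq : 2 < α * q := (div_lt_iff₀ (by linarith)).1 hqα
  have hα : 0 < α := (div_pos two_pos (by linarith)).trans hqα
  have hC0 : 0 ≤ C := (integral_nonneg fun ω => Real.rpow_nonneg (hW0 1 0 ω) q).trans (hC 1 0)
  have hbias : ∀ᶠ N : ℕ in atTop, C * (N : ℝ) ^ (α * (1 - q)) ≤ ε / 2 := by
    have h := ((tendsto_rpow_neg_atTop (y := α * (q - 1)) (by nlinarith)).comp
      tendsto_natCast_atTop_atTop).const_mul C
    rw [mul_zero] at h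
    refine (h.eventually (ge_mem_nhds (half_pos hε))).mono fun N hN => le_of_eq_of_le ?_ hN
    simp only [Function.comp_apply]
    ring_nf
  refine (ae_eventually_notMem_of_le_summable (summable_truncation_bound hαq hα1 C ε) ?_).mono
    fun ω hω => hω.mono fun N hN => not_lt.1 hN
  filter_upwards [hbias, eventually_gt_atTop 0] with N hN hN0
  have hx : (0 : ℝ) < N := Nat.cast_pos.2 hN0
  have hcα : ∀ p, ((N : ℝ) ^ α) ^ p = (N : ℝ) ^ (α * p) := fun p =>
    (Real.rpow_mul hx.le α p).symm
  refine (measure_lt_abs_sum_sub_integral_le (hW N) (hW0 N) (hind N) hq.le (hWq N) (hC N)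
    (Real.rpow_pos_of_pos hx α) (by positivity) ?_).trans ?_
  · rw [Fintype.card_fin, hcα, mul_div_assoc]
    exact mul_le_mul_of_nonneg_left hN hx.le
  · rw [← ENNReal.ofReal_add (by positivity) (by positivity)]
    refine ENNReal.ofReal_le_ofReal (le_of_eq ?_)
    have h2α : (N : ℝ) ^ (2 * α - 3) = ((N : ℝ) ^ α) ^ 2 / (N : ℝ) ^ 3 := by
      rw [← Real.rpow_mul_natCast hx.le, mul_comm α, ← Real.rpow_sub_natCast hx.ne']
      norm_num
    simp only [Fintype.card_fin, hcα, h2α, Real.rpow_sub hx, Real.rpow_one]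
    field_simp
    ring

theorem ae_tendsto_average_sub_integral {W : (N : ℕ) → Fin N → Ω → ℝ} {q C : ℝ}
    (hq : 2 < q) (hW : ∀ N i, Measurable (W N i)) (hW0 : ∀ N i ω, 0 ≤ W N i ω)
    (hind : ∀ N, iIndepFun (W N) μ) (hWq : ∀ N i, Integrable (fun ω => W N i ω ^ q) μ)
    (hC : ∀ N i, ∫ ω, W N i ω ^ q ∂μ ≤ C) :
    ∀ᵐ ω ∂μ, Tendsto (fun N : ℕ => (1 / N : ℝ) * ∑ i, (W N i ω - ∫ ω', W N i ω' ∂μ))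
      atTop (𝓝 0) := by
  have h := fun m : ℕ => ae_eventually_abs_sum_sub_integral_le (ε := 1 / (m + 1)) hq
    Nat.one_div_pos_of_nat hW hW0 hind hWq hC
  filter_upwards [ae_all_iff.2 h] with ω hω
  refine Metric.tendsto_nhds.2 fun ε hε => ?_
  obtain ⟨m, hm⟩ := exists_nat_one_div_lt hε
  filter_upwards [hω m, eventually_gt_atTop 0] with N hN hN0
  have hx : (0 : ℝ) < N := Nat.cast_pos.2 hN0
  rw [dist_zero_right, Real.norm_eq_abs, abs_mul, abs_of_pos (one_div_pos.2 hx), one_div_mul_eq_div,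
    div_lt_iff₀ hx]
  nlinarith

lemma ae_tendsto_average_increment {Z : (N : ℕ) → Fin N → Ω → ℝ → ℝ} {T q C t : ℝ} (hq : 2 < q)
    (hmono : ∀ N i ω, MonotoneOn (Z N i ω) (Icc 0 T))
    (hmeas : ∀ N i t, Measurable fun ω => Z N i ω t) (hindep : ∀ N, iIndepFun (Z N) μ)
    (hintq : ∀ N i, Integrable (fun ω => |Z N i ω T - Z N i ω 0| ^ q) μ)
    (hintpt : ∀ N i t, Integrable (fun ω => Z N i ω t) μ)
    (hC : ∀ N i, ∫ ω, |Z N i ω T - Z N i ω 0| ^ q ∂μ ≤ C) (ht : t ∈ Icc 0 T) :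
    ∀ᵐ ω ∂μ, Tendsto (fun N : ℕ => (1 / N : ℝ) * ∑ i, (Z N i ω t - Z N i ω 0) -
      (1 / N : ℝ) * ∑ i, ((∫ ω', Z N i ω' t ∂μ) - ∫ ω', Z N i ω' 0 ∂μ)) atTop (𝓝 0) := by
  have h0 : (0 : ℝ) ∈ Icc 0 T := ⟨le_rfl, ht.1.trans ht.2⟩
  have hT : T ∈ Icc 0 T := ⟨h0.2, le_rfl⟩
  have hW0 : ∀ N i ω, 0 ≤ Z N i ω t - Z N i ω 0 := fun N i ω =>
    sub_nonneg.2 (hmono N i ω h0 ht ht.1)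
  have hWq : ∀ N i ω, (Z N i ω t - Z N i ω 0) ^ q ≤ |Z N i ω T - Z N i ω 0| ^ q := fun N i ω =>
    Real.rpow_le_rpow (hW0 N i ω) ((sub_le_sub_right (hmono N i ω ht hT ht.2) _).trans
      (le_abs_self _)) (by linarith)
  have hWint : ∀ N i, Integrable (fun ω => (Z N i ω t - Z N i ω 0) ^ q) μ := fun N i =>
    (hintq N i).mono' (((hmeas N i t).sub (hmeas N i 0)).pow_const q).aestronglyMeasurable
      (ae_of_all _ fun ω => by
        rw [Real.norm_eq_abs, abs_of_nonneg (Real.rpow_nonneg (hW0 N i ω) q)]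
        exact hWq N i ω)
  filter_upwards [ae_tendsto_average_sub_integral (W := fun N i ω => Z N i ω t - Z N i ω 0) hq
    (fun N i => (hmeas N i t).sub (hmeas N i 0)) hW0 (fun N => (hindep N).comp (fun _ f => f t - f 0)
      fun _ => (measurable_pi_apply t).sub (measurable_pi_apply 0))
    hWint (fun N i => (integral_mono (hWint N i) (hintq N i) (hWq N i)).trans (hC N i))]
    with ω hω
  convert hω using 2 with N
  rw [← mul_sub, ← sum_sub_distrib]
  simp_rw [integral_sub (hintpt N _ t) (hintpt N _ 0)]

end ProbabilityTheory

lemma natCast_mul_div_mem_Icc {T : ℝ} (hT : 0 ≤ T) {K k : ℕ} (hk : k ≤ K) :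
    (k : ℝ) * T / K ∈ Icc 0 T := by
  rcases K.eq_zero_or_pos with rfl | hK
  · simp [hT]
  have hK' : (0 : ℝ) < K := Nat.cast_pos.2 hK
  refine ⟨by positivity, (div_le_iff₀ hK').2 ?_⟩
  rw [mul_comm T]
  exact mul_le_mul_of_nonneg_right (Nat.cast_le.2 hk) hT

lemma exists_lt_natCast_mul_div_le_le {T t : ℝ} (hT : 0 < T) {K : ℕ} (hK : 0 < K)
    (ht : t ∈ Icc 0 T) : ∃ k < K, (k : ℝ) * T / K ≤ t ∧ t ≤ (k + 1) * T / K := by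
  have hK' : (0 : ℝ) < K := Nat.cast_pos.2 hK
  set s := t * K / T
  have hs0 : 0 ≤ s := by have := ht.1; positivity
  have hsK : s ≤ K := (div_le_iff₀ hT).2 (by nlinarith [ht.2])
  have key : ∀ k : ℕ, ((k : ℝ) * T / K ≤ t ↔ (k : ℝ) ≤ s) ∧ (t ≤ (k + 1) * T / K ↔ s ≤ k + 1) :=
    fun k => ⟨by rw [div_le_iff₀ hK', le_div_iff₀ hT], by rw [le_div_iff₀ hK', div_le_iff₀ hT]⟩
  rcases hsK.lt_or_eq with hlt | heq
  · refine ⟨⌊s⌋₊, (Nat.floor_lt hs0).2 hlt, (key _).1.2 (Nat.floor_le hs0),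
      (key _).2.2 (Nat.lt_floor_add_one s).le⟩
  · refine ⟨K - 1, Nat.sub_lt hK one_pos, (key _).1.2 ?_, (key _).2.2 ?_⟩ <;>
      rw [Nat.cast_sub (Nat.one_le_of_lt hK), heq] <;> push_cast <;> linarith

lemma abs_sub_le_of_monotoneOn_of_grid {T : ℝ} (hT : 0 < T) {K : ℕ} (hK : 0 < K)
    {φ ψ : ℝ → ℝ} {e δ : ℝ} (hφ : MonotoneOn φ (Icc 0 T))
    (hψ : ∀ s ∈ Icc 0 T, ∀ t ∈ Icc 0 T, |t - s| ≤ T / K → |ψ t - ψ s| ≤ δ)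
    (hgrid : ∀ k ≤ K, |φ (k * T / K) - ψ (k * T / K)| ≤ e) {t : ℝ} (ht : t ∈ Icc 0 T) :
    |φ t - ψ t| ≤ e + δ := by
  obtain ⟨k, hkK, hlo, hhi⟩ := exists_lt_natCast_mul_div_le_le hT hK ht
  have hk := natCast_mul_div_mem_Icc hT.le hkK.le
  have hk1 : ((k : ℝ) + 1) * T / K ∈ Icc 0 T := by
    simpa using natCast_mul_div_mem_Icc hT.le (Nat.succ_le_of_lt hkK)
  have hmesh : ((k : ℝ) + 1) * T / K - k * T / K = T / K := by ring
  have hψlo := hψ _ hk t ht (by rw [abs_of_nonneg (by linarith)]; linarith)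
  have hψhi := hψ t ht _ hk1 (by rw [abs_of_nonneg (by linarith)]; linarith)
  have hlo' := hgrid k hkK.le
  have hhi' : |φ ((k + 1) * T / K) - ψ ((k + 1) * T / K)| ≤ e := by
    simpa using hgrid (k + 1) (Nat.succ_le_of_lt hkK)
  have hφlo := hφ hk ht hlo
  have hφhi := hφ ht hk1 hhi
  rw [abs_le] at *
  constructor <;> linarith

theorem tendstoUniformlyOn_sub_of_monotoneOn_of_holder {ι : Type*} {l : Filter ι}
    {T r L : ℝ} (hT : 0 < T) (hr : 0 < r) (hL : 0 ≤ L) {φ ψ : ι → ℝ → ℝ}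
    (hφ : ∀ n, MonotoneOn (φ n) (Icc 0 T))
    (hψ : ∀ n, ∀ s ∈ Icc 0 T, ∀ t ∈ Icc 0 T, |ψ n t - ψ n s| ≤ L * |t - s| ^ r)
    (hgrid : ∀ K k : ℕ, k ≤ K → Tendsto (fun n => φ n (k * T / K) - ψ n (k * T / K)) l (𝓝 0)) :
    TendstoUniformlyOn (fun n t => φ n t - ψ n t) 0 l (Icc 0 T) := by
  rw [Metric.tendstoUniformlyOn_iff]
  intro ε hε
  have hmesh : Tendsto (fun K : ℕ => L * (T / K) ^ r) atTop (𝓝 0) := by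
    simpa [Real.zero_rpow hr.ne'] using
      ((tendsto_const_div_atTop_nhds_zero_nat T).rpow_const (Or.inr hr.le)).const_mul L
  obtain ⟨K, hKε, hK⟩ := ((hmesh.eventually (gt_mem_nhds (half_pos hε))).and
    (eventually_gt_atTop 0)).exists
  have hev : ∀ᶠ n in l, ∀ k ∈ range (K + 1),
      |φ n (k * T / K) - ψ n (k * T / K)| < ε / 2 :=
    (Finset.eventually_all _).2 fun k hk => by
      simpa using (Metric.tendsto_nhds.1 (hgrid K k (mem_range_succ_iff.1 hk)))
        (ε / 2) (half_pos hε)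
  filter_upwards [hev] with n hn t ht
  rw [Pi.zero_apply, dist_zero_left, Real.norm_eq_abs]
  refine (abs_sub_le_of_monotoneOn_of_grid hT hK (hφ n) (δ := L * (T / K) ^ r)
    (fun s hs t' ht' hst => (hψ n s hs t' ht').trans (mul_le_mul_of_nonneg_left
      (Real.rpow_le_rpow (abs_nonneg _) hst hr.le) hL))
    (fun k hk => (hn k (mem_range_succ_iff.2 hk)).le) ht).trans_lt ?_
  linarith

lemma TendstoUniformlyOn.tendsto_iSup_tri_abs_sub {ι : Type*} {l : Filter ι} {T : ℝ} (hT : 0 ≤ T)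
    {F : ι → ℝ → ℝ} (hF : TendstoUniformlyOn F 0 l (Icc 0 T)) :
    Tendsto (fun n => ⨆ p : Tri T, |F n (p : ℝ × ℝ).2 - F n (p : ℝ × ℝ).1|) l (𝓝 0) := by
  have : Nonempty (Tri T) := ⟨⟨(0, 0), le_rfl, le_rfl, hT⟩⟩
  refine tendsto_order.2 ⟨fun a ha => .of_forall fun n =>
    ha.trans_le (Real.iSup_nonneg fun _ => abs_nonneg _), fun a ha => ?_⟩
  filter_upwards [Metric.tendstoUniformlyOn_iff.1 hF (a / 3) (by positivity)] with n hn
  refine (ciSup_le fun p => ?_).trans_lt (by linarith : 2 * (a / 3) < a)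
  obtain ⟨⟨t₁, t₂⟩, h0, h12, h2⟩ := p
  have h₁ := hn t₁ ⟨h0, h12.trans h2⟩
  have h₂ := hn t₂ ⟨h0.trans h12, h2⟩
  rw [Pi.zero_apply, dist_zero_left, Real.norm_eq_abs] at h₁ h₂
  linarith [abs_sub (F n t₂) (F n t₁)]

lemma abs_average_sub_le_of_holder {N : ℕ} {m : Fin N → ℝ → ℝ} {w : Fin N → ℝ} {M L r s t : ℝ}
    (hm : ∀ i, |m i t - m i s| ≤ M * w i * |t - s| ^ r) (hL : M * ((1 / N) * ∑ i, w i) ≤ L) :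
    |(1 / N : ℝ) * ∑ i, (m i t - m i 0) - (1 / N : ℝ) * ∑ i, (m i s - m i 0)| ≤
      L * |t - s| ^ r := by
  rw [← mul_sub, ← sum_sub_distrib, abs_mul, abs_of_nonneg (by positivity)]
  calc (1 / N : ℝ) * |∑ i, ((m i t - m i 0) - (m i s - m i 0))|
      ≤ (1 / N : ℝ) * ∑ i, M * w i * |t - s| ^ r := by
        gcongr
        refine (abs_sum_le_sum_abs _ _).trans (sum_le_sum fun i _ => ?_)
        simpa using hm i
    _ = M * ((1 / N) * ∑ i, w i) * |t - s| ^ r := by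
        rw [← sum_mul, ← mul_sum]
        ring
    _ ≤ L * |t - s| ^ r := mul_le_mul_of_nonneg_right hL (by positivity)

theorem one_parameter_complete_LLN_general
    {Ω : Type*} [MeasurableSpace Ω] (μ : Measure Ω) [IsProbabilityMeasure μ]
    (T q r : ℝ) (hT : 0 < T) (hq : 2 < q) (hr : 0 < r)
    (Z : (N : ℕ) → Fin N → Ω → ℝ → ℝ) (M : ℕ → ℝ) (w : (N : ℕ) → Fin N → ℝ)
    (hM : ∀ N, 0 < M N) (hw : ∀ N i, 0 ≤ w N i)
    (hD : ∀ N i ω, MemDUp T (Z N i ω))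
    (hmeas : ∀ N i t, Measurable (fun ω => Z N i ω t))
    (hindep : ∀ N, iIndepFun (Z N) μ)
    (hintq : ∀ N i, Integrable (fun ω => |Z N i ω T - Z N i ω 0| ^ q) μ)
    (hintpt : ∀ N i t, Integrable (fun ω => Z N i ω t) μ)
    (hmom : ∀ N i, (∫ ω, |Z N i ω T - Z N i ω 0| ^ q ∂μ) ^ (1/q) ≤ M N)
    (hHolder : ∀ N i, ∀ s t, s ∈ Set.Icc (0 : ℝ) T → t ∈ Set.Icc (0 : ℝ) T →
      |(∫ ω, Z N i ω t ∂μ) - ∫ ω, Z N i ω s ∂μ| ≤ M N * w N i * |t - s| ^ r)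
    (hbdd : ∃ B : ℝ, ∀ N : ℕ, 0 < N → M N + (1 / N : ℝ) * ∑ i, w N i ≤ B) :
    ∀ᵐ ω ∂μ, Tendsto (fun N : ℕ =>
        ⨆ p : Tri T, |(1 / N : ℝ) * ∑ i,
          ((Z N i ω (p : ℝ × ℝ).2 - Z N i ω (p : ℝ × ℝ).1) -
           ∫ ω', (Z N i ω' (p : ℝ × ℝ).2 - Z N i ω' (p : ℝ × ℝ).1) ∂μ)|)
      atTop (nhds 0) := by
  obtain ⟨B, hB⟩ := hbdd
  have hw_avg : ∀ N : ℕ, 0 ≤ (1 / N : ℝ) * ∑ i, w N i := fun N =>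
    mul_nonneg (by positivity) (sum_nonneg fun i _ => hw N i)
  have hMB : ∀ N, 0 < N → M N ≤ B := fun N hN => by linarith [hB N hN, hw_avg N]
  have hMw : ∀ N, M N * ((1 / N : ℝ) * ∑ i, w N i) ≤ B ^ 2 := fun N => by
    rcases N.eq_zero_or_pos with rfl | hN
    · simp [sq_nonneg]
    · nlinarith [hB N hN, hw_avg N, hM N]
  have hC : ∀ N i, ∫ ω, |Z N i ω T - Z N i ω 0| ^ q ∂μ ≤ B ^ q := fun N i =>
    (Real.rpow_inv_le_iff_of_pos (integral_nonneg fun ω => by positivity)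
      ((hM N).le.trans (hMB N i.pos)) (by linarith)).1 ((one_div q ▸ hmom N i).trans (hMB N i.pos))
  let φ : Ω → ℕ → ℝ → ℝ := fun ω N t => (1 / N : ℝ) * ∑ i, (Z N i ω t - Z N i ω 0)
  let ψ : ℕ → ℝ → ℝ := fun N t => (1 / N : ℝ) * ∑ i, ((∫ ω, Z N i ω t ∂μ) - ∫ ω, Z N i ω 0 ∂μ)
  have hψ : ∀ N, ∀ s ∈ Icc 0 T, ∀ t ∈ Icc 0 T, |ψ N t - ψ N s| ≤ B ^ 2 * |t - s| ^ r :=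
    fun N s hs t ht => abs_average_sub_le_of_holder (m := fun i t => ∫ ω, Z N i ω t ∂μ)
      (fun i => hHolder N i s t hs ht) (hMw N)
  have hgrid : ∀ᵐ ω ∂μ, ∀ K k : ℕ, k ≤ K →
      Tendsto (fun N => φ ω N (k * T / K) - ψ N (k * T / K)) atTop (𝓝 0) := by
    simp only [ae_all_iff, eventually_imp_distrib_left]
    exact fun K k hk => ae_tendsto_average_increment hq (fun N i ω => (hD N i ω).1) hmeas hindep
      hintq hintpt hC (natCast_mul_div_mem_Icc hT.le hk)
  filter_upwards [hgrid] with ω hω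
  have hφ : ∀ N, MonotoneOn (φ ω N) (Icc 0 T) := fun N s hs t ht hst =>
    mul_le_mul_of_nonneg_left (sum_le_sum fun i _ =>
      sub_le_sub_right ((hD N i ω).1 hs ht hst) _) (by positivity)
  convert (tendstoUniformlyOn_sub_of_monotoneOn_of_holder hT hr (sq_nonneg B) hφ hψ
    hω).tendsto_iSup_tri_abs_sub hT.le using 4 with N p
  simp only [φ, ψ]
  simp_rw [integral_sub (hintpt N _ _) (hintpt N _ _), ← mul_sub, ← sum_sub_distrib]
  congr 2
  exact sum_congr rfl fun i _ => by ring

/-- Corollary 1.2, complete law of large numbers part. -/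
theorem one_parameter_complete_LLN
    {Ω : Type*} [MeasurableSpace Ω] (μ : Measure Ω) [IsProbabilityMeasure μ]
    (T q r : ℝ) (hT : 0 < T) (hq : 2 < q) (hr : 0 < r)
    (Z : (N : ℕ) → Fin N → Ω → ℝ → ℝ) (M : ℕ → ℝ) (w : (N : ℕ) → Fin N → ℝ)
    (hM : ∀ N, 0 < M N) (hw : ∀ N i, 0 ≤ w N i)
    (hD : ∀ N i ω, MemDUp T (Z N i ω))
    (hmeas : ∀ N i t, Measurable (fun ω => Z N i ω t))
    (hindep : ∀ N, iIndepFun (Z N) μ)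
    (hintq : ∀ N i, Integrable (fun ω => |Z N i ω T - Z N i ω 0| ^ q) μ)
    (hintpt : ∀ N i t, Integrable (fun ω => Z N i ω t) μ)
    (hmom : ∀ N i, (∫ ω, |Z N i ω T - Z N i ω 0| ^ q ∂μ) ^ (1/q) ≤ M N)
    (hHolder : ∀ N i, ∀ s t, s ∈ Set.Icc (0 : ℝ) T → t ∈ Set.Icc (0 : ℝ) T →
      |(∫ ω, Z N i ω t ∂μ) - ∫ ω, Z N i ω s ∂μ| ≤ M N * w N i * |t - s| ^ r)
    (hbdd : ∃ B : ℝ, ∀ N : ℕ, 0 < N → M N + (1 / N : ℝ) * ∑ i, w N i ≤ B)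
    (hexp : (q ^ 2 - 2 * q - 2) * r > 2) :
    ∀ᵐ ω ∂μ, Tendsto (fun N : ℕ =>
        ⨆ p : Tri T, |(1 / N : ℝ) * ∑ i,
          ((Z N i ω (p : ℝ × ℝ).2 - Z N i ω (p : ℝ × ℝ).1) -
           ∫ ω', (Z N i ω' (p : ℝ × ℝ).2 - Z N i ω' (p : ℝ × ℝ).1) ∂μ)|)
      atTop (nhds 0) :=
  one_parameter_complete_LLN_general μ T q r hT hq hr Z M w hM hw hD hmeas hindep hintq hintpt hmom
    hHolder hbdd
end

section
/- Let w : Δ → [0,∞) be continuously differentiable with sup w ≤ C, and let Z(t) be the counting process with last-arrival-time dependent intensity w, i.e. with arrival times τ₀ = 0 < τ₁ < τ₂ < ⋯ satisfying P(t < τ_k | F_{τ_{k−1}}) = exp(−∫_{τ_{k−1}}^t w(τ_{k−1},u) du) for t ≥ τ_{k−1}, and Z(t) = max{k : τ_k ≤ t}. Then for all 0 ≤ s ≤ t ≤ T: E[Z(t) − Z(s)] ≤ C·(t − s). -/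
open MeasureTheory

/-!
Given the last arrival `σ = τ k`, the next arrival survives past `u` with probability
`S(σ, u) = exp (-∫_σ^u w(σ, ·))`, and `-∂ᵤ S = w S ≤ C S`. Integrating this against the
conditional law of `τ (k + 1)` gives `P(τ (k + 1) ∈ (s, t]) ≤ C ∫_s^t P(τ k ≤ u < τ (k + 1)) du`.
The increment `Z t - Z s` is at most the number of `k` with `τ (k + 1) ∈ (s, t]`, and for each `u`
the events `τ k ≤ u < τ (k + 1)` are disjoint, so summing over `k` gives `C (t - s)`.
To make `S` jointly continuous, `w` is first extended from the triangle to a continuous function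
on the plane with values in `[0, C]` (Tietze).
-/

open Set Filter Topology ENNReal

theorem isClosed_Tri (T : ℝ) : IsClosed (Tri T) :=
  (isClosed_le continuous_const continuous_fst).inter
    ((isClosed_le continuous_fst continuous_snd).inter
      (isClosed_le continuous_snd continuous_const))

theorem integral_le_toReal_lintegral_ofReal {α : Type*} {mα : MeasurableSpace α} {μ : Measure α}
    {f : α → ℝ} (hf : Integrable f μ) :
    ∫ x, f x ∂μ ≤ (∫⁻ x, ENNReal.ofReal (f x) ∂μ).toReal := by
  rw [integral_eq_lintegral_pos_part_sub_lintegral_neg_part hf]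
  exact sub_le_self _ ENNReal.toReal_nonneg

theorem ContinuousOn.exists_continuous_extension_mem_Icc {X : Type*} [TopologicalSpace X]
    [NormalSpace X] {s : Set X} {f : X → ℝ} (hf : ContinuousOn f s) (hs : IsClosed s)
    {a b : ℝ} (hab : a ≤ b) (hfs : ∀ x ∈ s, f x ∈ Icc a b) :
    ∃ g : X → ℝ, Continuous g ∧ (∀ x, g x ∈ Icc a b) ∧ EqOn g f s := by
  obtain ⟨g, hg, hgf⟩ := ContinuousMap.exists_extension_forall_mem_of_isClosedEmbedding
    ⟨s.domRestrict f, hf.domRestrict⟩ (fun x => hfs x x.2) (nonempty_Icc.2 hab)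
    hs.isClosedEmbedding_subtypeVal
  exact ⟨g, g.continuous, hg, fun x hx => congrFun hgf ⟨x, hx⟩⟩

/-- The probability of no arrival in `(r, u]` after an arrival at `r`, for the hazard
`v ↦ W (r, v)`; it is `1` for `u ≤ r`. -/
noncomputable def hazardSurvival (W : ℝ × ℝ → ℝ) (r u : ℝ) : ℝ :=
  Real.exp (-∫ v in r..max r u, W (r, v))

section hazardSurvival

variable {W : ℝ × ℝ → ℝ} {C r u : ℝ}

theorem hazardSurvival_of_le_left (h : u ≤ r) : hazardSurvival W r u = 1 := by
  simp [hazardSurvival, max_eq_left h]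

theorem hazardSurvival_of_le (h : r ≤ u) :
    hazardSurvival W r u = Real.exp (-∫ v in r..u, W (r, v)) := by
  rw [hazardSurvival, max_eq_right h]

theorem hazardSurvival_eq_exp_of_eqOn {w : ℝ → ℝ → ℝ} (hru : r ≤ u)
    (h : ∀ v ∈ Icc r u, W (r, v) = w r v) :
    hazardSurvival W r u = Real.exp (-∫ v in r..u, w r v) := by
  rw [hazardSurvival_of_le hru, intervalIntegral.integral_congr fun v hv => h v ?_]
  rwa [uIcc_of_le hru] at hv

theorem hazardSurvival_pos : 0 < hazardSurvival W r u := Real.exp_pos _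

theorem hazardSurvival_le_one (hW : ∀ p, 0 ≤ W p) : hazardSurvival W r u ≤ 1 :=
  Real.exp_le_one_iff.2 <| neg_nonpos.2 <|
    intervalIntegral.integral_nonneg (le_max_left _ _) fun _ _ => hW _

theorem continuous_hazardSurvival (hW : Continuous W) :
    Continuous fun p : ℝ × ℝ => hazardSurvival W p.1 p.2 := by
  have hint : ∀ (r a b : ℝ), IntervalIntegrable (fun v => W (r, v)) volume a b := fun r a b =>
    (hW.comp (continuous_const.prodMk continuous_id)).intervalIntegrable a b
  have hcont : ∀ {s : ℝ × ℝ → ℝ}, Continuous s →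
      Continuous fun p : ℝ × ℝ => ∫ v in (0 : ℝ)..s p, W (p.1, v) := fun hs =>
    intervalIntegral.continuous_parametric_intervalIntegral_of_continuous
      (f := fun p v => W (p.1, v)) (hW.comp (continuous_fst.fst.prodMk continuous_snd)) hs
  have hprim : (fun p : ℝ × ℝ => ∫ v in p.1..max p.1 p.2, W (p.1, v)) =
      fun p => (∫ v in (0 : ℝ)..max p.1 p.2, W (p.1, v)) - ∫ v in (0 : ℝ)..p.1, W (p.1, v) := by
    funext p
    rw [intervalIntegral.integral_interval_sub_left (hint _ _ _) (hint _ _ _)]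
  have hexponent : Continuous fun p : ℝ × ℝ => ∫ v in p.1..max p.1 p.2, W (p.1, v) := by
    rw [hprim]
    exact (hcont (continuous_fst.max continuous_snd)).sub (hcont continuous_fst)
  exact hexponent.neg.rexp

theorem measurable_indicator_hazardSurvival (hW : Continuous W) :
    Measurable fun p : ℝ × ℝ => (Ici p.1).indicator (hazardSurvival W p.1) p.2 :=
  (continuous_hazardSurvival hW).measurable.indicator
    (measurableSet_le measurable_fst measurable_snd)

/-- The right derivative exists everywhere; at `u = r` the two-sided one need not. -/
theorem hasDerivWithinAt_hazardSurvival_Ioi (hW : Continuous W) (r u : ℝ) :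
    HasDerivWithinAt (hazardSurvival W r)
      (-(Ici r).indicator (fun v => W (r, v) * hazardSurvival W r v) u) (Ioi u) u := by
  rcases lt_or_ge u r with hur | hru
  · have hconst : hazardSurvival W r =ᶠ[𝓝 u] fun _ => 1 :=
      (eventually_lt_nhds hur).mono fun v hv => hazardSurvival_of_le_left hv.le
    rw [indicator_of_notMem (by simpa using hur), neg_zero]
    exact ((hasDerivAt_const u (1 : ℝ)).congr_of_eventuallyEq hconst).hasDerivWithinAt
  · have hF : HasDerivAt (fun v => ∫ x in r..v, W (r, x)) (W (r, u)) u :=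
      ((hW.comp (continuous_const.prodMk continuous_id)).integral_hasStrictDerivAt r u).hasDerivAt
    rw [indicator_of_mem (mem_Ici.2 hru), hazardSurvival_of_le hru]
    refine (hF.neg.exp.hasDerivWithinAt.congr (fun v hv => hazardSurvival_of_le ?_) ?_).congr_deriv
      (by simp only [Pi.neg_apply]; ring)
    · exact hru.trans (le_of_lt hv)
    · exact hazardSurvival_of_le hru

theorem hazardSurvival_sub_le (hW : Continuous W) (hWC : ∀ p, W p ≤ C) (r : ℝ) {a b : ℝ}
    (hab : a ≤ b) :
    hazardSurvival W r a - hazardSurvival W r b ≤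
      C * ∫ u in a..b, (Ici r).indicator (hazardSurvival W r) u := by
  have hcont : Continuous (hazardSurvival W r) :=
    (continuous_hazardSurvival hW).comp (continuous_const.prodMk continuous_id)
  have h := intervalIntegral.sub_le_integral_of_hasDeriv_right_of_le
    (φ := fun x => C * (Ici r).indicator (hazardSurvival W r) x) hab hcont.neg.continuousOn
    (fun x _ => (hasDerivWithinAt_hazardSurvival_Ioi hW r x).neg)
    ((hcont.integrableOn_Icc.indicator measurableSet_Ici).const_mul C) fun x _ => ?_
  · rw [intervalIntegral.integral_const_mul, Pi.neg_apply, Pi.neg_apply] at h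
    linarith
  · by_cases hx : x ∈ Ici r
    · simp only [indicator_of_mem hx, neg_neg]
      exact mul_le_mul_of_nonneg_right (hWC _) hazardSurvival_pos.le
    · simp [indicator_of_notMem hx]

theorem ofReal_hazardSurvival_sub_le (hW : Continuous W) (hWC : ∀ p, W p ≤ C) (r : ℝ) {a b : ℝ}
    (hab : a ≤ b) :
    ENNReal.ofReal (hazardSurvival W r a - hazardSurvival W r b) ≤
      ENNReal.ofReal C *
        ∫⁻ u in Ioc a b, ENNReal.ofReal ((Ici r).indicator (hazardSurvival W r) u) := by
  have hcont : Continuous (hazardSurvival W r) :=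
    (continuous_hazardSurvival hW).comp (continuous_const.prodMk continuous_id)
  have hnonneg : 0 ≤ (Ici r).indicator (hazardSurvival W r) :=
    indicator_nonneg fun _ _ => hazardSurvival_pos.le
  calc ENNReal.ofReal (hazardSurvival W r a - hazardSurvival W r b)
      ≤ ENNReal.ofReal (C * ∫ u in a..b, (Ici r).indicator (hazardSurvival W r) u) :=
        ENNReal.ofReal_le_ofReal (hazardSurvival_sub_le hW hWC r hab)
    _ = ENNReal.ofReal C * ∫⁻ u in Ioc a b,
          ENNReal.ofReal ((Ici r).indicator (hazardSurvival W r) u) := by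
        rw [ENNReal.ofReal_mul' (intervalIntegral.integral_nonneg hab fun u _ => hnonneg u),
          intervalIntegral.integral_of_le hab, ofReal_integral_eq_lintegral_ofReal
            (hcont.integrableOn_Ioc.indicator measurableSet_Ici) (Eventually.of_forall hnonneg)]

end hazardSurvival

theorem ofReal_sSup_sub_sSup_le_tsum_indicator {x : ℕ → ℝ} (hx : Monotone x) {s t : ℝ}
    (hst : s ≤ t) :
    ENNReal.ofReal (((sSup {k | x k ≤ t} : ℕ) : ℝ) - (sSup {k | x k ≤ s} : ℕ)) ≤
      ∑' k, (Ioc s t).indicator 1 (x (k + 1)) := by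
  set m := sSup {k | x k ≤ t}
  set n := sSup {k | x k ≤ s}
  rcases le_or_gt m n with hmn | hnm
  · simp [ENNReal.ofReal_of_nonpos, hmn]
  have hbdd : BddAbove {k | x k ≤ t} := by
    by_contra h
    have : m = 0 := Nat.sSup_of_not_bddAbove h
    omega
  have hne : {k | x k ≤ t}.Nonempty := by
    by_contra h
    have : m = 0 := by simp only [m, not_nonempty_iff_eq_empty.1 h, csSup_empty, Nat.bot_eq_zero]
    omega
  have hm : x m ≤ t := Nat.sSup_mem hne hbdd
  have harrival : ∀ k ∈ Finset.Ico n m, x (k + 1) ∈ Ioc s t := by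
    intro k hk
    rw [Finset.mem_Ico] at hk
    refine ⟨lt_of_not_ge fun hks => ?_, (hx hk.2).trans hm⟩
    have : k + 1 ≤ n := le_csSup (hbdd.mono fun j hj => le_trans hj hst) hks
    omega
  calc ENNReal.ofReal ((m : ℝ) - n) = ∑ _k ∈ Finset.Ico n m, (1 : ℝ≥0∞) := by
        rw [← Nat.cast_sub hnm.le, ENNReal.ofReal_natCast]
        simp
    _ ≤ ∑ k ∈ Finset.Ico n m, (Ioc s t).indicator 1 (x (k + 1)) :=
        Finset.sum_le_sum fun k hk => by rw [indicator_of_mem (harrival k hk), Pi.one_apply]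
    _ ≤ ∑' k, (Ioc s t).indicator 1 (x (k + 1)) := ENNReal.sum_le_tsum _

section CountingProcess

variable {Ω : Type*} {mΩ : MeasurableSpace Ω} {μ : Measure Ω} {τ : ℕ → Ω → ℝ} {s t : ℝ}

theorem lintegral_ofReal_sSup_sub_sSup_le_tsum_measure (hτ : ∀ ω, Monotone fun k => τ k ω)
    (hτm : ∀ k, Measurable (τ k)) (hst : s ≤ t) :
    ∫⁻ ω, ENNReal.ofReal (((sSup {k | τ k ω ≤ t} : ℕ) : ℝ) - (sSup {k | τ k ω ≤ s} : ℕ)) ∂μ ≤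
      ∑' k, μ (τ (k + 1) ⁻¹' Ioc s t) :=
  calc _ ≤ ∫⁻ ω, ∑' k, (Ioc s t).indicator 1 (τ (k + 1) ω) ∂μ :=
        lintegral_mono fun ω => ofReal_sSup_sub_sSup_le_tsum_indicator (hτ ω) hst
    _ = ∑' k, ∫⁻ ω, (τ (k + 1) ⁻¹' Ioc s t).indicator 1 ω ∂μ :=
        lintegral_tsum fun k => ((measurable_one.indicator measurableSet_Ioc).comp
          (hτm (k + 1))).aemeasurable
    _ = ∑' k, μ (τ (k + 1) ⁻¹' Ioc s t) := by
        simp_rw [lintegral_indicator_one ((hτm _) measurableSet_Ioc)]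

theorem measurable_measure_le_lt (hτm : ∀ k, Measurable (τ k)) [SFinite μ] (k : ℕ) :
    Measurable fun u => μ {ω | τ k ω ≤ u ∧ u < τ (k + 1) ω} :=
  measurable_measure_prodMk_left (s := {p : ℝ × Ω | τ k p.2 ≤ p.1 ∧ p.1 < τ (k + 1) p.2})
    ((measurableSet_le ((hτm k).comp measurable_snd) measurable_fst).inter
      (measurableSet_lt measurable_fst ((hτm (k + 1)).comp measurable_snd)))

theorem tsum_measure_le_lt_le_one [IsProbabilityMeasure μ] (hτ : ∀ ω, Monotone fun k => τ k ω)
    (hτm : ∀ k, Measurable (τ k)) (u : ℝ) :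
    ∑' k, μ {ω | τ k ω ≤ u ∧ u < τ (k + 1) ω} ≤ 1 := by
  refine (tsum_meas_le_meas_iUnion_of_disjoint μ (fun k => ?_) ?_).trans prob_le_one
  · exact ((hτm k) measurableSet_Iic).inter ((hτm (k + 1)) measurableSet_Ioi)
  · refine (pairwise_disjoint_on _).2 fun i j hij => disjoint_left.2 fun ω hi hj => ?_
    exact absurd (hi.2.trans_le ((hτ ω hij).trans hj.1)) (lt_irrefl u)

end CountingProcess

section ConditionalSurvival

variable {Ω : Type*} {G mΩ : MeasurableSpace Ω} {μ : Measure Ω} [IsFiniteMeasure μ]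
  {σ ρ : Ω → ℝ} {W : ℝ × ℝ → ℝ} {u : ℝ}

theorem measure_inter_lt_eq_setLIntegral_hazardSurvival_of_subset (hG : G ≤ mΩ)
    (hσ : Measurable σ) (hρ : Measurable ρ) (hW : Continuous W) (hW0 : ∀ p, 0 ≤ W p)
    (hsurv : ∀ᵐ ω ∂μ, σ ω ≤ u →
      μ[{ω | u < ρ ω}.indicator (fun _ => (1 : ℝ)) | G] ω = hazardSurvival W (σ ω) u)
    {B : Set Ω} (hB : MeasurableSet[G] B) (hBu : ∀ ω ∈ B, σ ω ≤ u) :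
    μ (B ∩ {ω | u < ρ ω}) = ∫⁻ ω in B, ENNReal.ofReal (hazardSurvival W (σ ω) u) ∂μ := by
  have hlt : MeasurableSet {ω | u < ρ ω} := hρ measurableSet_Ioi
  have hS : Integrable (fun ω => hazardSurvival W (σ ω) u) μ :=
    Integrable.of_bound (((continuous_hazardSurvival hW).measurable.comp
      (hσ.prodMk measurable_const)).aestronglyMeasurable) 1
      (Eventually.of_forall fun ω => by
        rw [Real.norm_of_nonneg hazardSurvival_pos.le]
        exact hazardSurvival_le_one hW0)
  have hreal : ∫ ω in B, hazardSurvival W (σ ω) u ∂μ = μ.real (B ∩ {ω | u < ρ ω}) :=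
    calc ∫ ω in B, hazardSurvival W (σ ω) u ∂μ
        = ∫ ω in B, μ[{ω | u < ρ ω}.indicator (fun _ => (1 : ℝ)) | G] ω ∂μ :=
          setIntegral_congr_ae (hG _ hB) (hsurv.mono fun ω h hω => (h (hBu ω hω)).symm)
      _ = ∫ ω in B, {ω | u < ρ ω}.indicator (fun _ => (1 : ℝ)) ω ∂μ :=
          setIntegral_condExp hG ((integrable_const 1).indicator hlt) hB
      _ = μ.real (B ∩ {ω | u < ρ ω}) := by
          rw [← Pi.one_def, integral_indicator_one hlt, measureReal_restrict_apply hlt, inter_comm]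
  rw [← ofReal_integral_eq_lintegral_ofReal hS.integrableOn
    (Eventually.of_forall fun _ => hazardSurvival_pos.le), hreal, ofReal_measureReal]

theorem measure_inter_lt_eq_setLIntegral_hazardSurvival (hG : G ≤ mΩ)
    (hσG : ∀ u, MeasurableSet[G] {ω | σ ω ≤ u}) (hρ : Measurable ρ) (hσρ : ∀ ω, σ ω ≤ ρ ω)
    (hW : Continuous W) (hW0 : ∀ p, 0 ≤ W p)
    (hsurv : ∀ᵐ ω ∂μ, σ ω ≤ u →
      μ[{ω | u < ρ ω}.indicator (fun _ => (1 : ℝ)) | G] ω = hazardSurvival W (σ ω) u)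
    {A : Set Ω} (hA : MeasurableSet[G] A) :
    μ (A ∩ {ω | u < ρ ω}) = ∫⁻ ω in A, ENNReal.ofReal (hazardSurvival W (σ ω) u) ∂μ := by
  have hσ : Measurable σ := measurable_of_Iic fun u => hG _ (hσG u)
  have hL : MeasurableSet {ω | σ ω ≤ u} := hG _ (hσG u)
  rw [← measure_inter_add_sdiff _ hL, ← lintegral_inter_add_sdiff _ _ hL]
  congr 1
  · rw [inter_right_comm]
    exact measure_inter_lt_eq_setLIntegral_hazardSurvival_of_subset hG hσ hρ hW hW0 hsurv
      (hA.inter (hσG u)) fun ω hω => hω.2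
  · -- on `u < σ`: `S = 1` and `u < σ ≤ ρ`
    have hdiff : (A ∩ {ω | u < ρ ω}) \ {ω | σ ω ≤ u} = A \ {ω | σ ω ≤ u} := by
      ext ω
      simp only [Set.mem_sdiff, mem_inter_iff, mem_ofPred_eq, not_le]
      exact ⟨fun h => ⟨h.1.1, h.2⟩, fun h => ⟨⟨h.1, h.2.trans_le (hσρ ω)⟩, h.2⟩⟩
    rw [hdiff, ← setLIntegral_one]
    refine (setLIntegral_congr_fun ((hG _ hA).diff hL) fun ω hω => ?_).symm
    rw [hazardSurvival_of_le_left (not_le.1 hω.2).le, ENNReal.ofReal_one]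

theorem lintegral_ofReal_indicator_hazardSurvival (hG : G ≤ mΩ)
    (hσG : ∀ u, MeasurableSet[G] {ω | σ ω ≤ u}) (hρ : Measurable ρ) (hW : Continuous W)
    (hW0 : ∀ p, 0 ≤ W p)
    (hsurv : ∀ᵐ ω ∂μ, σ ω ≤ u →
      μ[{ω | u < ρ ω}.indicator (fun _ => (1 : ℝ)) | G] ω = hazardSurvival W (σ ω) u) :
    ∫⁻ ω, ENNReal.ofReal ((Ici (σ ω)).indicator (hazardSurvival W (σ ω)) u) ∂μ =
      μ {ω | σ ω ≤ u ∧ u < ρ ω} := by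
  have hL : MeasurableSet[G] {ω | σ ω ≤ u} := hσG u
  rw [show {ω | σ ω ≤ u ∧ u < ρ ω} = {ω | σ ω ≤ u} ∩ {ω | u < ρ ω} from rfl,
    measure_inter_lt_eq_setLIntegral_hazardSurvival_of_subset hG
      (measurable_of_Iic fun u => hG _ (hσG u)) hρ hW hW0 hsurv hL fun _ h => h,
    ← lintegral_indicator (hG _ hL)]
  refine lintegral_congr fun ω => ?_
  by_cases h : σ ω ≤ u <;> simp [h]

theorem measure_mem_Ioc_le_mul_lintegral (hG : G ≤ mΩ) (hσG : ∀ u, MeasurableSet[G] {ω | σ ω ≤ u})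
    (hρ : Measurable ρ) (hσρ : ∀ ω, σ ω ≤ ρ ω) (hW : Continuous W) (hW0 : ∀ p, 0 ≤ W p)
    {C : ℝ} (hWC : ∀ p, W p ≤ C) {s t : ℝ} (hst : s ≤ t)
    (hsurv : ∀ u ∈ Icc s t, ∀ᵐ ω ∂μ, σ ω ≤ u →
      μ[{ω | u < ρ ω}.indicator (fun _ => (1 : ℝ)) | G] ω = hazardSurvival W (σ ω) u) :
    μ (ρ ⁻¹' Ioc s t) ≤
      ENNReal.ofReal C * ∫⁻ u in Ioc s t, μ {ω | σ ω ≤ u ∧ u < ρ ω} := by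
  have hσ : Measurable σ := measurable_of_Iic fun u => hG _ (hσG u)
  have hS : ∀ u, Measurable fun ω => ENNReal.ofReal (hazardSurvival W (σ ω) u) := fun u =>
    ((continuous_hazardSurvival hW).measurable.comp (hσ.prodMk measurable_const)).ennreal_ofReal
  have hsurv_at : ∀ u ∈ Icc s t, ∀ {A : Set Ω}, MeasurableSet[G] A →
      μ (A ∩ {ω | u < ρ ω}) = ∫⁻ ω in A, ENNReal.ofReal (hazardSurvival W (σ ω) u) ∂μ :=
    fun u hu _ hA =>
      measure_inter_lt_eq_setLIntegral_hazardSurvival hG hσG hρ hσρ hW hW0 (hsurv u hu) hA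
  set A := {ω | σ ω ≤ t}
  have hA : MeasurableSet[G] A := hσG t
  have hE : ρ ⁻¹' Ioc s t = (A ∩ {ω | s < ρ ω}) \ (A ∩ {ω | t < ρ ω}) := by
    ext ω
    simp only [mem_preimage, mem_Ioc, Set.mem_sdiff, mem_inter_iff, mem_ofPred_eq, A, not_and,
      not_lt]
    exact ⟨fun h => ⟨⟨(hσρ ω).trans h.2, h.1⟩, fun _ => h.2⟩, fun h => ⟨h.1.2, h.2 h.1.1⟩⟩
  have hsub : A ∩ {ω | t < ρ ω} ⊆ A ∩ {ω | s < ρ ω} :=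
    inter_subset_inter_right _ fun ω (h : t < ρ ω) => hst.trans_lt h
  calc μ (ρ ⁻¹' Ioc s t)
      = μ (A ∩ {ω | s < ρ ω}) - μ (A ∩ {ω | t < ρ ω}) := by
        rw [hE, measure_sdiff hsub ((hG _ hA).inter (hρ measurableSet_Ioi)).nullMeasurableSet
          (measure_ne_top _ _)]
    _ = ∫⁻ ω in A, ENNReal.ofReal (hazardSurvival W (σ ω) s) ∂μ -
          ∫⁻ ω in A, ENNReal.ofReal (hazardSurvival W (σ ω) t) ∂μ := by
        rw [hsurv_at s (left_mem_Icc.2 hst) hA, hsurv_at t (right_mem_Icc.2 hst) hA]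
    _ ≤ ∫⁻ ω in A, ENNReal.ofReal (hazardSurvival W (σ ω) s - hazardSurvival W (σ ω) t) ∂μ := by
        refine (lintegral_sub_le _ _ (hS t)).trans_eq (lintegral_congr fun ω => ?_)
        rw [ENNReal.ofReal_sub _ hazardSurvival_pos.le]
    _ ≤ ∫⁻ ω, ENNReal.ofReal C * (∫⁻ u in Ioc s t,
          ENNReal.ofReal ((Ici (σ ω)).indicator (hazardSurvival W (σ ω)) u)) ∂μ :=
        (lintegral_mono fun ω => ofReal_hazardSurvival_sub_le hW hWC (σ ω) hst).trans
          (setLIntegral_le_lintegral _ _)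
    _ = ENNReal.ofReal C * ∫⁻ u in Ioc s t, (∫⁻ ω,
          ENNReal.ofReal ((Ici (σ ω)).indicator (hazardSurvival W (σ ω)) u) ∂μ) := by
        rw [lintegral_const_mul' _ _ ENNReal.ofReal_ne_top, lintegral_lintegral_swap
          ((measurable_indicator_hazardSurvival hW).comp
            ((hσ.comp measurable_fst).prodMk measurable_snd)).ennreal_ofReal.aemeasurable]
    _ = ENNReal.ofReal C * ∫⁻ u in Ioc s t, μ {ω | σ ω ≤ u ∧ u < ρ ω} := by
        rw [setLIntegral_congr_fun measurableSet_Ioc fun u hu =>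
          lintegral_ofReal_indicator_hazardSurvival hG hσG hρ hW hW0
            (hsurv u (Ioc_subset_Icc_self hu))]

end ConditionalSurvival

theorem lintegral_ofReal_count_increment_le {Ω : Type*} {mΩ : MeasurableSpace Ω} {μ : Measure Ω}
    [IsProbabilityMeasure μ] {τ : ℕ → Ω → ℝ} {G : ℕ → MeasurableSpace Ω} (hG : ∀ k, G k ≤ mΩ)
    (hτG : ∀ k u, MeasurableSet[G k] {ω | τ k ω ≤ u}) (hτ : ∀ ω, Monotone fun k => τ k ω)
    {W : ℝ × ℝ → ℝ} (hW : Continuous W) (hW0 : ∀ p, 0 ≤ W p) {C : ℝ} (hWC : ∀ p, W p ≤ C)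
    {s t : ℝ} (hst : s ≤ t)
    (hsurv : ∀ k, ∀ u ∈ Icc s t, ∀ᵐ ω ∂μ, τ k ω ≤ u →
      μ[{ω | u < τ (k + 1) ω}.indicator (fun _ => (1 : ℝ)) | G k] ω =
        hazardSurvival W (τ k ω) u) :
    ∫⁻ ω, ENNReal.ofReal (((sSup {k | τ k ω ≤ t} : ℕ) : ℝ) - (sSup {k | τ k ω ≤ s} : ℕ)) ∂μ ≤
      ENNReal.ofReal C * ENNReal.ofReal (t - s) := by
  have hτm : ∀ k, Measurable (τ k) := fun k => measurable_of_Iic fun u => hG k _ (hτG k u)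
  calc _ ≤ ∑' k, μ (τ (k + 1) ⁻¹' Ioc s t) :=
        lintegral_ofReal_sSup_sub_sSup_le_tsum_measure hτ hτm hst
    _ ≤ ∑' k, ENNReal.ofReal C * ∫⁻ u in Ioc s t, μ {ω | τ k ω ≤ u ∧ u < τ (k + 1) ω} :=
        ENNReal.tsum_le_tsum fun k => measure_mem_Ioc_le_mul_lintegral (hG k) (hτG k)
          (hτm (k + 1)) (fun ω => hτ ω k.le_succ) hW hW0 hWC hst (hsurv k)
    _ = ENNReal.ofReal C * ∫⁻ u in Ioc s t, ∑' k, μ {ω | τ k ω ≤ u ∧ u < τ (k + 1) ω} := by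
        rw [ENNReal.tsum_mul_left,
          lintegral_tsum fun k => (measurable_measure_le_lt hτm k).aemeasurable]
    _ ≤ ENNReal.ofReal C * ∫⁻ _ in Ioc s t, 1 :=
        mul_le_mul_right (lintegral_mono fun u => tsum_measure_le_lt_le_one hτ hτm u) _
    _ = ENNReal.ofReal C * ENNReal.ofReal (t - s) := by
        rw [setLIntegral_one, Real.volume_Ioc]

theorem counting_process_expected_increment_bound_general
    {Ω : Type*} {mΩ : MeasurableSpace Ω} (μ : Measure Ω) [IsProbabilityMeasure μ]
    (F : Filtration ℝ mΩ) (T C : ℝ) (hC : 0 ≤ C)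
    (w : ℝ → ℝ → ℝ)
    (hw0 : ∀ p ∈ Tri T, 0 ≤ w p.1 p.2)
    (hwC1 : ContDiffOn ℝ 1 (fun p : ℝ × ℝ => w p.1 p.2) (Tri T))
    (hwbdd : ∀ p ∈ Tri T, w p.1 p.2 ≤ C)
    (τ : ℕ → Ω → ℝ)
    (hτ0 : ∀ ω, τ 0 ω = 0)
    (hτmono : ∀ ω k, τ k ω < τ (k + 1) ω)
    (hst : ∀ k, IsStoppingTime F (fun ω => (τ k ω : WithTop ℝ)))
    (hcond : ∀ (k : ℕ) (t : ℝ), 1 ≤ k → t ∈ Set.Icc (0 : ℝ) T →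
      ∀ᵐ ω ∂μ, τ (k - 1) ω ≤ t →
        (μ[Set.indicator {ω' | t < τ k ω'} (fun _ => (1 : ℝ)) |
            (hst (k - 1)).measurableSpace]) ω =
          Real.exp (-∫ u in (τ (k - 1) ω)..t, w (τ (k - 1) ω) u))
    (Z : ℝ → Ω → ℕ)
    (hZ : ∀ t ω, Z t ω = sSup {k | τ k ω ≤ t})
    (hint : ∀ t ∈ Set.Icc (0 : ℝ) T, Integrable (fun ω => (Z t ω : ℝ)) μ) :
    ∀ s t : ℝ, 0 ≤ s → s ≤ t → t ≤ T →
      (∫ ω, (Z t ω : ℝ) ∂μ) - ∫ ω, (Z s ω : ℝ) ∂μ ≤ C * (t - s) := by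
  intro s t hs hst' htT
  obtain ⟨W, hW, hW_mem, hWw⟩ := hwC1.continuousOn.exists_continuous_extension_mem_Icc
    (isClosed_Tri T) hC fun p hp => ⟨hw0 p hp, hwbdd p hp⟩
  have hτ : ∀ ω, Monotone fun k => τ k ω := fun ω =>
    monotone_nat_of_le_succ fun k => (hτmono ω k).le
  have hsurv : ∀ k, ∀ u ∈ Icc s t, ∀ᵐ ω ∂μ, τ k ω ≤ u →
      μ[{ω | u < τ (k + 1) ω}.indicator (fun _ => (1 : ℝ)) | (hst k).measurableSpace] ω =
        hazardSurvival W (τ k ω) u := by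
    intro k u hu
    filter_upwards [hcond (k + 1) u le_add_self ⟨hs.trans hu.1, hu.2.trans htT⟩] with ω hω hku
    have hτk : 0 ≤ τ k ω := hτ0 ω ▸ hτ ω k.zero_le
    rw [hazardSurvival_eq_exp_of_eqOn hku fun v hv =>
      hWw ⟨hτk, hv.1, hv.2.trans (hu.2.trans htT)⟩]
    simpa using hω hku
  have hlin := lintegral_ofReal_count_increment_le (fun k => (hst k).measurableSpace_le)
    (fun k u => by simpa using (hst k).measurableSet_le' u) hτ hW (fun p => (hW_mem p).1)
    (fun p => (hW_mem p).2) hst' hsurv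
  have hZt := hint t ⟨hs.trans hst', htT⟩
  have hZs := hint s ⟨hs, hst'.trans htT⟩
  rw [← integral_sub hZt hZs]
  refine (integral_le_toReal_lintegral_ofReal (hZt.sub hZs)).trans
    (ENNReal.toReal_le_of_le_ofReal (mul_nonneg hC (sub_nonneg.2 hst')) ?_)
  simpa only [hZ, Pi.sub_apply, ENNReal.ofReal_mul hC] using hlin

/-- Lipschitz bound on the expected increment of a counting process with
last-arrival-time dependent intensity. -/
theorem counting_process_expected_increment_bound
    {Ω : Type*} {mΩ : MeasurableSpace Ω} (μ : Measure Ω) [IsProbabilityMeasure μ]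
    (F : Filtration ℝ mΩ) (T C : ℝ) (hT : 0 < T) (hC : 0 ≤ C)
    (w : ℝ → ℝ → ℝ)
    (hw0 : ∀ p ∈ Tri T, 0 ≤ w p.1 p.2)
    (hwC1 : ContDiffOn ℝ 1 (fun p : ℝ × ℝ => w p.1 p.2) (Tri T))
    (hwbdd : ∀ p ∈ Tri T, w p.1 p.2 ≤ C)
    (τ : ℕ → Ω → ℝ)
    (hτ0 : ∀ ω, τ 0 ω = 0)
    (hτmono : ∀ ω k, τ k ω < τ (k + 1) ω)
    (hst : ∀ k, IsStoppingTime F (fun ω => (τ k ω : WithTop ℝ)))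
    (hcond : ∀ (k : ℕ) (t : ℝ), 1 ≤ k → t ∈ Set.Icc (0 : ℝ) T →
      ∀ᵐ ω ∂μ, τ (k - 1) ω ≤ t →
        (μ[Set.indicator {ω' | t < τ k ω'} (fun _ => (1 : ℝ)) |
            (hst (k - 1)).measurableSpace]) ω =
          Real.exp (-∫ u in (τ (k - 1) ω)..t, w (τ (k - 1) ω) u))
    (Z : ℝ → Ω → ℕ)
    (hZ : ∀ t ω, Z t ω = sSup {k | τ k ω ≤ t})
    (hint : ∀ t ∈ Set.Icc (0 : ℝ) T, Integrable (fun ω => (Z t ω : ℝ)) μ) :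
    ∀ s t : ℝ, 0 ≤ s → s ≤ t → t ≤ T →
      (∫ ω, (Z t ω : ℝ) ∂μ) - ∫ ω, (Z s ω : ℝ) ∂μ ≤ C * (t - s) :=
  counting_process_expected_increment_bound_general μ F T C hC w hw0 hwC1 hwbdd τ hτ0 hτmono hst
    hcond Z hZ hint
end
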